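/- arXiv:1406.0348 — 3 statements merged into one kernel-verified Lean document; each statement's English description precedes it below -/
import Mathlib

section
/- The curvature tensor of the Levi-Civita connection of the Riemannian metric ĝ induced by a Minkowski norm F on ℝⁿ∖{0} is given by R̂ⁱ_{jkl}(y) = (1/F²(y)) (Cˢ_{jk} Cⁱ_{sl} − Cˢ_{jl} Cⁱ_{sk}). -/
open Set

/-- Partial derivative of a scalar function on `ℝⁿ` in the `i`-th coordinate direction. -/
noncomputable def pd {n : ℕ} (i : Fin n) (f : (Fin n → ℝ) → ℝ) (y : Fin n → ℝ) : ℝ :=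
  fderiv ℝ f y (Pi.single i 1)

/-- Fundamental tensor `g_{ij}(y) = ½ ∂²(F²)/∂yⁱ∂yʲ` of a Minkowski norm `F`. -/
noncomputable def gF {n : ℕ} (F : (Fin n → ℝ) → ℝ) (y : Fin n → ℝ) (i j : Fin n) : ℝ :=
  pd i (pd j (fun z => F z ^ 2)) y / 2

/-- The metric evaluated on two vectors: `g_y(u,v) = g_{ij}(y) uⁱ vʲ`. -/
def gmet {n : ℕ} (G : (Fin n → ℝ) → Fin n → Fin n → ℝ) (y u v : Fin n → ℝ) : ℝ :=
  ∑ i, ∑ j, G y i j * u i * v j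

/-- Inverse metric `gⁱʲ(y)` (matrix inverse). -/
noncomputable def ginv {n : ℕ} (G : (Fin n → ℝ) → Fin n → Fin n → ℝ) (y : Fin n → ℝ) :
    Matrix (Fin n) (Fin n) ℝ :=
  (Matrix.of (G y))⁻¹

/-- Christoffel symbols of the second kind of the metric `G`:
`γⁱ_{jk} = (gⁱˢ/2)(∂g_{sj}/∂yᵏ + ∂g_{sk}/∂yʲ − ∂g_{jk}/∂yˢ)`. -/
noncomputable def christoffel {n : ℕ} (G : (Fin n → ℝ) → Fin n → Fin n → ℝ)
    (y : Fin n → ℝ) (i j k : Fin n) : ℝ :=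
  (1 / 2) * ∑ s, ginv G y i s *
    (pd k (fun z => G z s j) y + pd j (fun z => G z s k) y - pd s (fun z => G z j k) y)

/-- Cartan torsion `C_{ijk} = (F/4) ∂³F²/∂yⁱ∂yʲ∂yᵏ`. -/
noncomputable def cartan {n : ℕ} (F : (Fin n → ℝ) → ℝ) (y : Fin n → ℝ) (i j k : Fin n) : ℝ :=
  (F y / 4) * pd i (pd j (pd k (fun z => F z ^ 2))) y

/-- Mixed Cartan torsion `Cⁱ_{jk} = gⁱˢ C_{sjk}`. -/
noncomputable def cartanMixed {n : ℕ} (F : (Fin n → ℝ) → ℝ) (y : Fin n → ℝ) (i j k : Fin n) : ℝ :=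
  ∑ s, ginv (gF F) y i s * cartan F y s j k

/-- Covariant derivative (w.r.t. the Levi-Civita connection of `G`) of the vector field `V`
in the direction of the vector `X` at the point `y`:
`(∇_X V)ⁱ = X(Vⁱ) + γⁱ_{jk} Xʲ Vᵏ`. -/
noncomputable def covVec {n : ℕ} (G : (Fin n → ℝ) → Fin n → Fin n → ℝ)
    (V : (Fin n → ℝ) → Fin n → ℝ) (X y : Fin n → ℝ) : Fin n → ℝ :=
  fun i => fderiv ℝ (fun z => V z i) y X + ∑ j, ∑ k, christoffel G y i j k * X j * V y k

/-- Curvature tensor `Rⁱ_{jkl} = ∂γⁱ_{jl}/∂yᵏ − ∂γⁱ_{jk}/∂yˡ + γⁱ_{sk}γˢ_{jl} − γⁱ_{sl}γˢ_{jk}`. -/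
noncomputable def riem {n : ℕ} (G : (Fin n → ℝ) → Fin n → Fin n → ℝ)
    (y : Fin n → ℝ) (i j k l : Fin n) : ℝ :=
  pd k (fun z => christoffel G z i j l) y - pd l (fun z => christoffel G z i j k) y +
    ∑ s, (christoffel G y i s k * christoffel G y s j l -
      christoffel G y i s l * christoffel G y s j k)

/-- The curvature operator `R(X,Y)Z`, with components `Zʲ Xᵏ Yˡ Rⁱ_{jkl}`. -/
noncomputable def riemVec {n : ℕ} (G : (Fin n → ℝ) → Fin n → Fin n → ℝ)
    (y X Y Z : Fin n → ℝ) : Fin n → ℝ :=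
  fun i => ∑ j, ∑ k, ∑ l, riem G y i j k l * Z j * X k * Y l

/-- Ambient sectional curvature `K̂(U,V) = ĝ(R̂(V,U)V, U) / (ĝ(U,U)ĝ(V,V) − ĝ(U,V)²)`. -/
noncomputable def ambSec {n : ℕ} (G : (Fin n → ℝ) → Fin n → Fin n → ℝ)
    (y U V : Fin n → ℝ) : ℝ :=
  gmet G y (riemVec G y V U V) U /
    (gmet G y U U * gmet G y V V - (gmet G y U V) ^ 2)

/-- Sectional curvature of a hypersurface with unit normal `ν`, defined through the Gauss
equation: `K(U,V) = K̂(U,V) + (h(U,U)h(V,V) − h(U,V)²)/(g(U,U)g(V,V) − g(U,V)²)`, where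
`h(X,Y) = ĝ(∇̂_X ν, Y)` (the sign of `h` is immaterial as it appears quadratically). -/
noncomputable def hypSec {n : ℕ} (G : (Fin n → ℝ) → Fin n → Fin n → ℝ)
    (ν : (Fin n → ℝ) → Fin n → ℝ) (y U V : Fin n → ℝ) : ℝ :=
  ambSec G y U V +
    (gmet G y (covVec G ν U y) U * gmet G y (covVec G ν V y) V -
      (gmet G y (covVec G ν U y) V) ^ 2) /
    (gmet G y U U * gmet G y V V - (gmet G y U V) ^ 2)

/-- `F` is a Minkowski norm on `ℝⁿ`: smooth away from the origin, positive on nonzero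
vectors, positively homogeneous of degree one, and strongly convex (the fundamental
tensor is positive definite). -/
structure IsMinkowskiNorm (n : ℕ) (F : (Fin n → ℝ) → ℝ) : Prop where
  smooth : ContDiffOn ℝ (⊤ : ℕ∞) F {y | y ≠ 0}
  nonneg : ∀ y, 0 ≤ F y
  pos : ∀ y : Fin n → ℝ, y ≠ 0 → 0 < F y
  homog : ∀ lam : ℝ, 0 < lam → ∀ y, F (lam • y) = lam * F y
  posdef : ∀ y : Fin n → ℝ, y ≠ 0 → ∀ X : Fin n → ℝ, X ≠ 0 → 0 < gmet (gF F) y X X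

/-- `M` is a hypersurface of the Riemannian space with metric `G`, with unit normal field
`ν`: `ν` is smooth near `M` and of unit length along `M`, and every `g`-orthogonal
direction to `ν` at a point of `M` is realized as the velocity of a smooth curve in `M`. -/
structure IsHypersurface (n : ℕ) (G : (Fin n → ℝ) → Fin n → Fin n → ℝ)
    (M : Set (Fin n → ℝ)) (ν : (Fin n → ℝ) → Fin n → ℝ) : Prop where
  nonempty : M.Nonempty
  conn : IsPreconnected M
  smooth_nu : ∃ U, IsOpen U ∧ M ⊆ U ∧ ∀ i, ContDiffOn ℝ (⊤ : ℕ∞) (fun z => ν z i) U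
  unit : ∀ y ∈ M, gmet G y (ν y) (ν y) = 1
  curve : ∀ y ∈ M, ∀ X : Fin n → ℝ, gmet G y X (ν y) = 0 →
    ∃ c : ℝ → (Fin n → ℝ), ∃ ε > (0 : ℝ), ContDiff ℝ (⊤ : ℕ∞) c ∧ c 0 = y ∧ deriv c 0 = X ∧
      ∀ t : ℝ, |t| < ε → c t ∈ M

/-- The hypersurface `M` with unit normal `ν` is totally umbilical with mean curvature `H`:
`∇̂_X ν = −H X` for every tangent vector `X` at every point of `M`. -/
def TotallyUmbilical {n : ℕ} (G : (Fin n → ℝ) → Fin n → Fin n → ℝ)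
    (M : Set (Fin n → ℝ)) (ν : (Fin n → ℝ) → Fin n → ℝ) (H : (Fin n → ℝ) → ℝ) : Prop :=
  ∀ y ∈ M, ∀ X : Fin n → ℝ, gmet G y X (ν y) = 0 → covVec G ν X y = -(H y) • X

/-- Riemannian length of a path `c : [0,1] → ℝⁿ` with respect to the metric `G`. -/
noncomputable def pathLength {n : ℕ} (G : (Fin n → ℝ) → Fin n → Fin n → ℝ)
    (c : ℝ → Fin n → ℝ) : ℝ :=
  ∫ t in (0:ℝ)..1, Real.sqrt (gmet G (c t) (deriv c t) (deriv c t))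

/-- Intrinsic Riemannian distance in a subset `S` of `ℝⁿ` with respect to `G`: the infimum
of lengths of `C¹` paths inside `S` joining the two points. -/
noncomputable def pathDist {n : ℕ} (G : (Fin n → ℝ) → Fin n → Fin n → ℝ)
    (S : Set (Fin n → ℝ)) (a b : Fin n → ℝ) : ℝ :=
  sInf {L : ℝ | ∃ c : ℝ → Fin n → ℝ, ContDiff ℝ 1 c ∧ c 0 = a ∧ c 1 = b ∧
    (∀ t ∈ Set.Icc (0:ℝ) 1, c t ∈ S) ∧ L = pathLength G c}

/-- The standard Euclidean metric on `ℝⁿ`. -/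
def euclG (n : ℕ) : (Fin n → ℝ) → Fin n → Fin n → ℝ :=
  fun _ i j => if i = j then 1 else 0

/-- The round sphere of radius `r` centered at the origin of Euclidean `ℝⁿ`. -/
def euclSphere (n : ℕ) (r : ℝ) : Set (Fin n → ℝ) :=
  {z | ∑ i, z i ^ 2 = r ^ 2}

namespace PdAux


variable {n : ℕ} {U : Set (Fin n → ℝ)}

lemma pd_congr {i : Fin n} {f g : (Fin n → ℝ) → ℝ} {z : Fin n → ℝ}
    (h : f =ᶠ[nhds z] g) : pd i f z = pd i g z := by
  unfold pd; rw [h.fderiv_eq]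

lemma pd_contDiffOn (hU : IsOpen U) {f : (Fin n → ℝ) → ℝ} (hf : ContDiffOn ℝ (⊤ : ℕ∞) f U)
    (i : Fin n) : ContDiffOn ℝ (⊤ : ℕ∞) (pd i f) U := by
  have h1 : ContDiffOn ℝ (⊤ : ℕ∞) (fderiv ℝ f) U := hf.fderiv_of_isOpen hU (by simp)
  exact h1.clm_apply contDiffOn_const

lemma pd_diffAt (hU : IsOpen U) {f : (Fin n → ℝ) → ℝ} (hf : ContDiffOn ℝ (⊤ : ℕ∞) f U)
    {z : Fin n → ℝ} (hz : z ∈ U) (i : Fin n) : DifferentiableAt ℝ (pd i f) z :=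
  ((pd_contDiffOn hU hf i).contDiffAt (hU.mem_nhds hz)).differentiableAt (by simp)

lemma diffAt (hU : IsOpen U) {f : (Fin n → ℝ) → ℝ} (hf : ContDiffOn ℝ (⊤ : ℕ∞) f U)
    {z : Fin n → ℝ} (hz : z ∈ U) : DifferentiableAt ℝ f z :=
  (hf.contDiffAt (hU.mem_nhds hz)).differentiableAt (by simp)

lemma pd_comm (hU : IsOpen U) {f : (Fin n → ℝ) → ℝ} (hf : ContDiffOn ℝ (⊤ : ℕ∞) f U)
    {z : Fin n → ℝ} (hz : z ∈ U) (i j : Fin n) :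
    pd i (pd j f) z = pd j (pd i f) z := by
  have hat : ContDiffAt ℝ (⊤ : ℕ∞) f z := hf.contDiffAt (hU.mem_nhds hz)
  have hsymm : IsSymmSndFDerivAt ℝ f z := (hat.of_le (m := (2 : WithTop ℕ∞)) (WithTop.coe_le_coe.2 (le_top : (2 : ℕ∞) ≤ ⊤))).isSymmSndFDerivAt (by simp)
  have hd : DifferentiableAt ℝ (fderiv ℝ f) z :=
    (hat.fderiv_right (m := (⊤ : ℕ∞)) (by simp)).differentiableAt (by simp)
  have key : ∀ (a : Fin n) (v : Fin n → ℝ),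
      pd a (fun w => fderiv ℝ f w v) z = fderiv ℝ (fderiv ℝ f) z (Pi.single a 1) v := by
    intro a v
    have h := hd.hasFDerivAt.clm_apply (hasFDerivAt_const v z)
    unfold pd
    rw [h.fderiv]
    simp
  have e1 : pd i (pd j f) z = fderiv ℝ (fderiv ℝ f) z (Pi.single i 1) (Pi.single j 1) :=
    key i (Pi.single j 1)
  have e2 : pd j (pd i f) z = fderiv ℝ (fderiv ℝ f) z (Pi.single j 1) (Pi.single i 1) :=
    key j (Pi.single i 1)
  rw [e1, e2, hsymm]

lemma pd_mul {i : Fin n} {f g : (Fin n → ℝ) → ℝ} {z : Fin n → ℝ}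
    (hf : DifferentiableAt ℝ f z) (hg : DifferentiableAt ℝ g z) :
    pd i (fun w => f w * g w) z = pd i f z * g z + f z * pd i g z := by
  unfold pd; rw [fderiv_fun_mul hf hg]
  simp [smul_eq_mul]; ring

lemma pd_const {i : Fin n} {z : Fin n → ℝ} (c : ℝ) :
    pd i (fun _ => c) z = 0 := by
  unfold pd; rw [fderiv_fun_const]; rfl

lemma pd_div_const {i : Fin n} {f : (Fin n → ℝ) → ℝ} {z : Fin n → ℝ} (c : ℝ)
    (hf : DifferentiableAt ℝ f z) :
    pd i (fun w => f w / c) z = pd i f z / c := by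
  simp only [div_eq_mul_inv]
  unfold pd; rw [fderiv_mul_const hf]; simp [smul_eq_mul]; ring

lemma pd_sum {i : Fin n} {ι : Type*} {s : Finset ι} {f : ι → (Fin n → ℝ) → ℝ} {z : Fin n → ℝ}
    (hf : ∀ a ∈ s, DifferentiableAt ℝ (f a) z) :
    pd i (fun w => ∑ a ∈ s, f a w) z = ∑ a ∈ s, pd i (f a) z := by
  unfold pd; rw [fderiv_fun_sum hf]; simp

lemma pd_const_mul {i : Fin n} {f : (Fin n → ℝ) → ℝ} {z : Fin n → ℝ} (c : ℝ)
    (hf : DifferentiableAt ℝ f z) :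
    pd i (fun w => c * f w) z = c * pd i f z := by
  unfold pd; rw [fderiv_const_mul hf]; rfl

lemma contDiffAt_finset_prod {ι : Type*} [DecidableEq ι] {x : Fin n → ℝ} (s : Finset ι)
    (f : ι → (Fin n → ℝ) → ℝ) (h : ∀ a ∈ s, ContDiffAt ℝ (⊤ : ℕ∞) (f a) x) :
    ContDiffAt ℝ (⊤ : ℕ∞) (fun z => ∏ a ∈ s, f a z) x := by
  induction s using Finset.induction with
  | empty => simpa using contDiffAt_const
  | insert a t hna ih =>
    simp only [Finset.prod_insert hna]
    exact (h a (Finset.mem_insert_self a t)).mul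
      (ih fun b hb => h b (Finset.mem_insert_of_mem hb))

section Metric

variable {F : (Fin n → ℝ) → ℝ}

lemma U_open : IsOpen {z : Fin n → ℝ | z ≠ 0} := isOpen_ne

lemma f2_smooth (hF : ContDiffOn ℝ (⊤ : ℕ∞) F {z : Fin n → ℝ | z ≠ 0}) :
    ContDiffOn ℝ (⊤ : ℕ∞) (fun z => F z ^ 2) {z : Fin n → ℝ | z ≠ 0} := hF.pow 2

lemma g_smooth (hF : ContDiffOn ℝ (⊤ : ℕ∞) F {z : Fin n → ℝ | z ≠ 0}) (a b : Fin n) :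
    ContDiffOn ℝ (⊤ : ℕ∞) (fun z => gF F z a b) {z : Fin n → ℝ | z ≠ 0} := by
  have := (pd_contDiffOn U_open (pd_contDiffOn U_open (f2_smooth hF) b) a).div_const 2
  exact this

lemma g_symm (hF : ContDiffOn ℝ (⊤ : ℕ∞) F {z : Fin n → ℝ | z ≠ 0}) {z : Fin n → ℝ}
    (hz : z ≠ 0) (a b : Fin n) : gF F z a b = gF F z b a := by
  unfold gF
  rw [pd_comm U_open (f2_smooth hF) hz]

lemma g_det_ne (hF : ContDiffOn ℝ (⊤ : ℕ∞) F {z : Fin n → ℝ | z ≠ 0})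
    (hpos : ∀ y : Fin n → ℝ, y ≠ 0 → ∀ X : Fin n → ℝ, X ≠ 0 → 0 < gmet (gF F) y X X)
    {z : Fin n → ℝ} (hz : z ≠ 0) : (Matrix.of (gF F z)).det ≠ 0 := by
  intro hdet
  obtain ⟨v, hv, hmv⟩ := (Matrix.exists_mulVec_eq_zero_iff).2 hdet
  have h0 : gmet (gF F) z v v = 0 := by
    unfold gmet
    have : ∀ i, ∑ j, gF F z i j * v i * v j = v i * ((Matrix.of (gF F z)).mulVec v i) := by
      intro i
      rw [Matrix.mulVec, dotProduct]
      rw [Finset.mul_sum]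
      exact Finset.sum_congr rfl fun j _ => by simp [Matrix.of_apply]; ring
    rw [Finset.sum_congr rfl fun i _ => this i]
    rw [hmv]
    simp
  exact absurd h0 (ne_of_gt (hpos z hz v hv))

lemma g_isUnit_det (hF : ContDiffOn ℝ (⊤ : ℕ∞) F {z : Fin n → ℝ | z ≠ 0})
    (hpos : ∀ y : Fin n → ℝ, y ≠ 0 → ∀ X : Fin n → ℝ, X ≠ 0 → 0 < gmet (gF F) y X X)
    {z : Fin n → ℝ} (hz : z ≠ 0) : IsUnit (Matrix.of (gF F z)).det :=
  isUnit_iff_ne_zero.2 (g_det_ne hF hpos hz)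

lemma ginv_mul_g (hF : ContDiffOn ℝ (⊤ : ℕ∞) F {z : Fin n → ℝ | z ≠ 0})
    (hpos : ∀ y : Fin n → ℝ, y ≠ 0 → ∀ X : Fin n → ℝ, X ≠ 0 → 0 < gmet (gF F) y X X)
    {z : Fin n → ℝ} (hz : z ≠ 0) (a b : Fin n) :
    ∑ s, ginv (gF F) z a s * gF F z s b = if a = b then 1 else 0 := by
  have h := Matrix.nonsing_inv_mul _ (g_isUnit_det hF hpos hz)
  have := congrFun (congrFun h a) b
  rw [Matrix.mul_apply] at this
  simpa [ginv, Matrix.one_apply] using this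

lemma g_mul_ginv (hF : ContDiffOn ℝ (⊤ : ℕ∞) F {z : Fin n → ℝ | z ≠ 0})
    (hpos : ∀ y : Fin n → ℝ, y ≠ 0 → ∀ X : Fin n → ℝ, X ≠ 0 → 0 < gmet (gF F) y X X)
    {z : Fin n → ℝ} (hz : z ≠ 0) (a b : Fin n) :
    ∑ s, gF F z a s * ginv (gF F) z s b = if a = b then 1 else 0 := by
  have h := Matrix.mul_nonsing_inv _ (g_isUnit_det hF hpos hz)
  have := congrFun (congrFun h a) b
  rw [Matrix.mul_apply] at this
  simpa [ginv, Matrix.one_apply] using this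

lemma ginv_symm (hF : ContDiffOn ℝ (⊤ : ℕ∞) F {z : Fin n → ℝ | z ≠ 0})
    {z : Fin n → ℝ} (hz : z ≠ 0) (a b : Fin n) :
    ginv (gF F) z a b = ginv (gF F) z b a := by
  have hsym : (Matrix.of (gF F z)).transpose = Matrix.of (gF F z) := by
    ext a b
    simp [Matrix.transpose_apply, Matrix.of_apply]
    exact g_symm hF hz b a
  have h2 := Matrix.transpose_nonsing_inv (Matrix.of (gF F z))
  rw [hsym] at h2
  unfold ginv
  conv_lhs => rw [← h2]
  rfl

lemma ginv_contDiffAt (hF : ContDiffOn ℝ (⊤ : ℕ∞) F {z : Fin n → ℝ | z ≠ 0})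
    (hpos : ∀ y : Fin n → ℝ, y ≠ 0 → ∀ X : Fin n → ℝ, X ≠ 0 → 0 < gmet (gF F) y X X)
    {z : Fin n → ℝ} (hz : z ≠ 0) (a b : Fin n) :
    ContDiffAt ℝ (⊤ : ℕ∞) (fun w => ginv (gF F) w a b) z := by
  have hentry : ∀ c d : Fin n, ContDiffAt ℝ (⊤ : ℕ∞) (fun w => gF F w c d) z := fun c d =>
    (g_smooth hF c d).contDiffAt (U_open.mem_nhds hz)
  have hdet : ∀ x : Fin n → ℝ, x ≠ 0 → ContDiffAt ℝ (⊤ : ℕ∞) (fun w => (Matrix.of (gF F w)).det) x := by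
    intro x hx
    have hentry' : ∀ c d : Fin n, ContDiffAt ℝ (⊤ : ℕ∞) (fun w => gF F w c d) x := fun c d =>
      (g_smooth hF c d).contDiffAt (U_open.mem_nhds hx)
    have : ∀ w : Fin n → ℝ, (Matrix.of (gF F w)).det =
        ∑ σ : Equiv.Perm (Fin n), (Equiv.Perm.sign σ : ℤ) * ∏ i, gF F w (σ i) i := by
      intro w
      rw [Matrix.det_apply]
      exact Finset.sum_congr rfl fun σ _ => by
        simp [Matrix.of_apply, Units.smul_def, zsmul_eq_mul]
    simp only [this]
    apply ContDiffAt.sum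
    intro σ _
    exact contDiffAt_const.mul (contDiffAt_finset_prod Finset.univ _ fun i _ => hentry' (σ i) i)
  have hadj : ContDiffAt ℝ (⊤ : ℕ∞) (fun w => (Matrix.of (gF F w)).adjugate a b) z := by
    have : ∀ w : Fin n → ℝ, (Matrix.of (gF F w)).adjugate a b =
        ∑ σ : Equiv.Perm (Fin n), (Equiv.Perm.sign σ : ℤ) *
          ∏ i, ((Matrix.of (gF F w)).updateRow b (Pi.single a 1)) (σ i) i := by
      intro w
      rw [Matrix.adjugate_apply, Matrix.det_apply]
      exact Finset.sum_congr rfl fun σ _ => by simp [Units.smul_def, zsmul_eq_mul]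
    simp only [this]
    apply ContDiffAt.sum
    intro σ _
    have hupd : ∀ i : Fin n, ContDiffAt ℝ (⊤ : ℕ∞)
        (fun w => ((Matrix.of (gF F w)).updateRow b (Pi.single a 1)) (σ i) i) z := by
      intro i
      by_cases h : σ i = b
      · simp only [h, Matrix.updateRow_self]
        exact contDiffAt_const
      · simp only [Matrix.updateRow_ne h]
        exact hentry (σ i) i
    exact contDiffAt_const.mul (contDiffAt_finset_prod Finset.univ _ fun i _ => hupd i)
  have heq : ∀ w : Fin n → ℝ, ginv (gF F) w a b =
      ((Matrix.of (gF F w)).det)⁻¹ * (Matrix.of (gF F w)).adjugate a b := by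
    intro w
    unfold ginv
    rw [Matrix.inv_def, Ring.inverse_eq_inv]
    simp [Matrix.smul_apply, smul_eq_mul]
  simp only [heq]
  exact ((hdet z hz).inv (g_det_ne hF hpos hz)).mul hadj

lemma ginv_diffAt (hF : ContDiffOn ℝ (⊤ : ℕ∞) F {z : Fin n → ℝ | z ≠ 0})
    (hpos : ∀ y : Fin n → ℝ, y ≠ 0 → ∀ X : Fin n → ℝ, X ≠ 0 → 0 < gmet (gF F) y X X)
    {z : Fin n → ℝ} (hz : z ≠ 0) (a b : Fin n) :
    DifferentiableAt ℝ (fun w => ginv (gF F) w a b) z :=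
  (ginv_contDiffAt hF hpos hz a b).differentiableAt (by simp)

/-- The third-order tensor `T_{abc} = ∂_a g_{bc}`. -/
noncomputable def Tg (F : (Fin n → ℝ) → ℝ) (z : Fin n → ℝ) (a b c : Fin n) : ℝ :=
  pd a (fun w => gF F w b c) z

lemma Tg_diffAt (hF : ContDiffOn ℝ (⊤ : ℕ∞) F {z : Fin n → ℝ | z ≠ 0})
    {z : Fin n → ℝ} (hz : z ≠ 0) (a b c : Fin n) :
    DifferentiableAt ℝ (fun w => Tg F w a b c) z :=
  pd_diffAt U_open (g_smooth hF b c) hz a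

lemma Tg_eq (hF : ContDiffOn ℝ (⊤ : ℕ∞) F {z : Fin n → ℝ | z ≠ 0})
    {z : Fin n → ℝ} (hz : z ≠ 0) (a b c : Fin n) :
    Tg F z a b c = pd a (pd b (pd c (fun w => F w ^ 2))) z / 2 := by
  have hd : DifferentiableAt ℝ (pd b (pd c (fun w => F w ^ 2))) z :=
    pd_diffAt U_open (pd_contDiffOn U_open (f2_smooth hF) c) hz b
  exact pd_div_const 2 hd

lemma Tg_symm_bc (hF : ContDiffOn ℝ (⊤ : ℕ∞) F {z : Fin n → ℝ | z ≠ 0})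
    {z : Fin n → ℝ} (hz : z ≠ 0) (a b c : Fin n) :
    Tg F z a b c = Tg F z a c b := by
  apply pd_congr
  filter_upwards [U_open.mem_nhds hz] with w hw
  exact g_symm hF hw b c

lemma Tg_symm_ab (hF : ContDiffOn ℝ (⊤ : ℕ∞) F {z : Fin n → ℝ | z ≠ 0})
    {z : Fin n → ℝ} (hz : z ≠ 0) (a b c : Fin n) :
    Tg F z a b c = Tg F z b a c := by
  rw [Tg_eq hF hz, Tg_eq hF hz]
  rw [pd_comm U_open (pd_contDiffOn U_open (f2_smooth hF) c) hz a b]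

lemma christoffel_eq (hF : ContDiffOn ℝ (⊤ : ℕ∞) F {z : Fin n → ℝ | z ≠ 0})
    {z : Fin n → ℝ} (hz : z ≠ 0) (i j k : Fin n) :
    christoffel (gF F) z i j k = (1 / 2) * ∑ s, ginv (gF F) z i s * Tg F z s j k := by
  unfold christoffel
  congr 1
  apply Finset.sum_congr rfl
  intro s _
  congr 1
  show Tg F z k s j + Tg F z j s k - Tg F z s j k = Tg F z s j k
  have e1 : Tg F z k s j = Tg F z s j k := by
    rw [Tg_symm_ab hF hz, Tg_symm_bc hF hz]
  have e2 : Tg F z j s k = Tg F z s j k := Tg_symm_ab hF hz j s k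
  rw [e1, e2]; ring

lemma cartan_eq (hF : ContDiffOn ℝ (⊤ : ℕ∞) F {z : Fin n → ℝ | z ≠ 0})
    {z : Fin n → ℝ} (hz : z ≠ 0) (i j k : Fin n) :
    cartan F z i j k = (F z / 2) * Tg F z i j k := by
  unfold cartan
  rw [Tg_eq hF hz]
  ring

lemma cartanMixed_eq (hF : ContDiffOn ℝ (⊤ : ℕ∞) F {z : Fin n → ℝ | z ≠ 0})
    {z : Fin n → ℝ} (hz : z ≠ 0) (i j k : Fin n) :
    cartanMixed F z i j k = F z * christoffel (gF F) z i j k := by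
  unfold cartanMixed
  rw [christoffel_eq hF hz, Finset.mul_sum, Finset.mul_sum]
  apply Finset.sum_congr rfl
  intro s _
  rw [cartan_eq hF hz]
  ring

/-- Fourth-order tensor `Q_{ksjl} = ∂_k T_{sjl}` at a point. -/
noncomputable def Qg (F : (Fin n → ℝ) → ℝ) (y : Fin n → ℝ) (k s j l : Fin n) : ℝ :=
  pd k (fun z => Tg F z s j l) y

lemma Qg_eq (hF : ContDiffOn ℝ (⊤ : ℕ∞) F {z : Fin n → ℝ | z ≠ 0})
    {y : Fin n → ℝ} (hy : y ≠ 0) (k s j l : Fin n) :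
    Qg F y k s j l = pd k (pd s (pd j (pd l (fun w => F w ^ 2)))) y / 2 := by
  unfold Qg
  have h1 : (fun z => Tg F z s j l) =ᶠ[nhds y]
      (fun z => pd s (pd j (pd l (fun w => F w ^ 2))) z / 2) := by
    filter_upwards [U_open.mem_nhds hy] with w hw
    exact Tg_eq hF hw s j l
  rw [pd_congr h1]
  exact pd_div_const 2 (pd_diffAt U_open
    (pd_contDiffOn U_open (pd_contDiffOn U_open (f2_smooth hF) l) j) hy s)

lemma Qg_swap12 (hF : ContDiffOn ℝ (⊤ : ℕ∞) F {z : Fin n → ℝ | z ≠ 0})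
    {y : Fin n → ℝ} (hy : y ≠ 0) (k s j l : Fin n) :
    Qg F y k s j l = Qg F y s k j l := by
  rw [Qg_eq hF hy, Qg_eq hF hy]
  rw [pd_comm U_open (pd_contDiffOn U_open (pd_contDiffOn U_open (f2_smooth hF) l) j) hy k s]

lemma Qg_swap23 (hF : ContDiffOn ℝ (⊤ : ℕ∞) F {z : Fin n → ℝ | z ≠ 0})
    {y : Fin n → ℝ} (hy : y ≠ 0) (k s j l : Fin n) :
    Qg F y k s j l = Qg F y k j s l := by
  rw [Qg_eq hF hy, Qg_eq hF hy]
  congr 1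
  apply pd_congr
  filter_upwards [U_open.mem_nhds hy] with w hw
  exact pd_comm U_open (pd_contDiffOn U_open (f2_smooth hF) l) hw s j

lemma Qg_swap34 (hF : ContDiffOn ℝ (⊤ : ℕ∞) F {z : Fin n → ℝ | z ≠ 0})
    {y : Fin n → ℝ} (hy : y ≠ 0) (k s j l : Fin n) :
    Qg F y k s j l = Qg F y k s l j := by
  rw [Qg_eq hF hy, Qg_eq hF hy]
  congr 1
  apply pd_congr
  filter_upwards [U_open.mem_nhds hy] with w hw
  apply pd_congr
  filter_upwards [U_open.mem_nhds hw] with v hv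
  exact pd_comm U_open (f2_smooth hF) hv j l

lemma Qg_swap14 (hF : ContDiffOn ℝ (⊤ : ℕ∞) F {z : Fin n → ℝ | z ≠ 0})
    {y : Fin n → ℝ} (hy : y ≠ 0) (k s j l : Fin n) :
    Qg F y k s j l = Qg F y l s j k := by
  rw [Qg_swap34 hF hy, Qg_swap23 hF hy, Qg_swap12 hF hy, Qg_swap23 hF hy, Qg_swap34 hF hy]

lemma pd_ginv (hF : ContDiffOn ℝ (⊤ : ℕ∞) F {z : Fin n → ℝ | z ≠ 0})
    (hpos : ∀ y : Fin n → ℝ, y ≠ 0 → ∀ X : Fin n → ℝ, X ≠ 0 → 0 < gmet (gF F) y X X)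
    {y : Fin n → ℝ} (hy : y ≠ 0) (k a b : Fin n) :
    pd k (fun z => ginv (gF F) z a b) y
      = -∑ c, ∑ s, ginv (gF F) y a c * Tg F y k c s * ginv (gF F) y s b := by
  have hgd : ∀ p q : Fin n, DifferentiableAt ℝ (fun z => gF F z p q) y := fun p q =>
    diffAt U_open (g_smooth hF p q) hy
  have hBd : ∀ p q : Fin n, DifferentiableAt ℝ (fun z => ginv (gF F) z p q) y := fun p q =>
    ginv_diffAt hF hpos hy p q
  have key : ∀ p q : Fin n, ∑ s, (Tg F y k p s * ginv (gF F) y s q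
      + gF F y p s * pd k (fun z => ginv (gF F) z s q) y) = 0 := by
    intro p q
    have h1 : pd k (fun z => ∑ s, gF F z p s * ginv (gF F) z s q) y = 0 := by
      have he : (fun z => ∑ s, gF F z p s * ginv (gF F) z s q) =ᶠ[nhds y]
          (fun _ => if p = q then (1:ℝ) else 0) := by
        filter_upwards [U_open.mem_nhds hy] with w hw
        exact g_mul_ginv hF hpos hw p q
      rw [pd_congr he, pd_const]
    rw [pd_sum (fun s _ => (hgd p s).fun_mul (hBd s q))] at h1
    rw [← h1]
    apply Finset.sum_congr rfl
    intro s _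
    rw [pd_mul (hgd p s) (hBd s q)]
    rfl
  have h0 : ∑ p, ginv (gF F) y a p * (∑ s, (Tg F y k p s * ginv (gF F) y s b
      + gF F y p s * pd k (fun z => ginv (gF F) z s b) y)) = 0 := by
    simp [key]
  have hexp : ∑ p, ginv (gF F) y a p * (∑ s, (Tg F y k p s * ginv (gF F) y s b
      + gF F y p s * pd k (fun z => ginv (gF F) z s b) y))
      = (∑ p, ∑ s, ginv (gF F) y a p * Tg F y k p s * ginv (gF F) y s b)
      + (∑ p, ∑ s, ginv (gF F) y a p * gF F y p s * pd k (fun z => ginv (gF F) z s b) y) := by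
    rw [← Finset.sum_add_distrib]
    apply Finset.sum_congr rfl
    intro p _
    rw [Finset.mul_sum, ← Finset.sum_add_distrib]
    apply Finset.sum_congr rfl
    intro s _
    ring
  have hsecond : (∑ p, ∑ s, ginv (gF F) y a p * gF F y p s * pd k (fun z => ginv (gF F) z s b) y)
      = pd k (fun z => ginv (gF F) z a b) y := by
    rw [Finset.sum_comm]
    have : ∀ s : Fin n, ∑ p, ginv (gF F) y a p * gF F y p s * pd k (fun z => ginv (gF F) z s b) y
        = (if a = s then (1:ℝ) else 0) * pd k (fun z => ginv (gF F) z s b) y := by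
      intro s
      rw [← ginv_mul_g hF hpos hy a s, Finset.sum_mul]
    rw [Finset.sum_congr rfl fun s _ => this s]
    simp
  rw [hexp, hsecond] at h0
  linarith [h0]

lemma pd_christoffel (hF : ContDiffOn ℝ (⊤ : ℕ∞) F {z : Fin n → ℝ | z ≠ 0})
    (hpos : ∀ y : Fin n → ℝ, y ≠ 0 → ∀ X : Fin n → ℝ, X ≠ 0 → 0 < gmet (gF F) y X X)
    {y : Fin n → ℝ} (hy : y ≠ 0) (i j k l : Fin n) :
    pd k (fun z => christoffel (gF F) z i j l) y
      = (1 / 2) * ∑ s, (pd k (fun z => ginv (gF F) z i s) y * Tg F y s j l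
          + ginv (gF F) y i s * Qg F y k s j l) := by
  have hBd : ∀ p q : Fin n, DifferentiableAt ℝ (fun z => ginv (gF F) z p q) y := fun p q =>
    ginv_diffAt hF hpos hy p q
  have hTd : ∀ a b c : Fin n, DifferentiableAt ℝ (fun z => Tg F z a b c) y := fun a b c =>
    Tg_diffAt hF hy a b c
  have he : (fun z => christoffel (gF F) z i j l) =ᶠ[nhds y]
      (fun z => (1 / 2) * ∑ s, ginv (gF F) z i s * Tg F z s j l) := by
    filter_upwards [U_open.mem_nhds hy] with w hw
    exact christoffel_eq hF hw i j l
  rw [pd_congr he]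
  rw [pd_const_mul _ (DifferentiableAt.fun_sum fun s _ => (hBd i s).fun_mul (hTd s j l))]
  rw [pd_sum (fun s _ => (hBd i s).fun_mul (hTd s j l))]
  congr 1
  apply Finset.sum_congr rfl
  intro s _
  rw [pd_mul (hBd i s) (hTd s j l)]
  rfl

end Metric

lemma sum3_swap13 (f : Fin n → Fin n → Fin n → ℝ) :
    ∑ s, ∑ c, ∑ b, f s c b = ∑ s, ∑ c, ∑ b, f b c s := by
  rw [Finset.sum_congr rfl (fun s _ => Finset.sum_comm (f := fun c b => f s c b)), Finset.sum_comm]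
  exact Finset.sum_congr rfl fun b _ => Finset.sum_comm

lemma sum3_cycle (f : Fin n → Fin n → Fin n → ℝ) :
    ∑ s, ∑ c, ∑ b, f s c b = ∑ s, ∑ c, ∑ b, f b s c := by
  rw [Finset.sum_comm]
  exact Finset.sum_congr rfl fun c _ => Finset.sum_comm

lemma half_mul_half (X Y : Fin n → ℝ) :
    ((1:ℝ)/2 * ∑ c, X c) * ((1:ℝ)/2 * ∑ b, Y b) = (1:ℝ)/4 * ∑ c, ∑ b, X c * Y b := by
  rw [← Finset.sum_mul_sum]
  ring

lemma core_algebra (B : Fin n → Fin n → ℝ) (T : Fin n → Fin n → Fin n → ℝ)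
    (hB : ∀ a b, B a b = B b a)
    (hTab : ∀ a b c, T a b c = T b a c)
    (hTbc : ∀ a b c, T a b c = T a c b)
    (i j k l : Fin n) :
    (1/2) * (∑ s, ((-∑ c, ∑ b, B i c * T k c b * B b s) * T s j l))
      - (1/2) * (∑ s, ((-∑ c, ∑ b, B i c * T l c b * B b s) * T s j k))
      + ∑ s, (((1/2) * ∑ c, B i c * T c s k) * ((1/2) * ∑ b, B s b * T b j l)
            - ((1/2) * ∑ c, B i c * T c s l) * ((1/2) * ∑ b, B s b * T b j k))
      = ∑ s, (((1/2) * ∑ c, B s c * T c j k) * ((1/2) * ∑ b, B i b * T b s l)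
            - ((1/2) * ∑ c, B s c * T c j l) * ((1/2) * ∑ b, B i b * T b s k)) := by
  set S : Fin n → Fin n → ℝ := fun k l => ∑ s, ∑ c, ∑ b,
    B i c * B b s * T k c b * T s j l with hS
  have claim1 : ∀ k' l' : Fin n,
      ∑ s, ((-∑ c, ∑ b, B i c * T k' c b * B b s) * T s j l') = -S k' l' := by
    intro k' l'
    rw [hS]
    rw [← Finset.sum_neg_distrib]
    apply Finset.sum_congr rfl
    intro s _
    rw [neg_mul, neg_inj, Finset.sum_mul]
    apply Finset.sum_congr rfl
    intro c _
    rw [Finset.sum_mul]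
    apply Finset.sum_congr rfl
    intro b _
    ring
  have claim2 : ∀ k' l' : Fin n,
      ∑ s, (((1/2) * ∑ c, B i c * T c s k') * ((1/2) * ∑ b, B s b * T b j l'))
        = (1/4) * S k' l' := by
    intro k' l'
    have expand : ∑ s, (((1/2) * ∑ c, B i c * T c s k') * ((1/2) * ∑ b, B s b * T b j l'))
        = (1/4) * ∑ s, ∑ c, ∑ b, B i c * T c s k' * B s b * T b j l' := by
      rw [Finset.mul_sum]
      apply Finset.sum_congr rfl
      intro s _
      rw [half_mul_half]
      congr 1
      apply Finset.sum_congr rfl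
      intro c _
      apply Finset.sum_congr rfl
      intro b _
      ring
    rw [expand]
    congr 1
    rw [sum3_swap13 (fun s c b => B i c * T c s k' * B s b * T b j l'), hS]
    apply Finset.sum_congr rfl; intro s _
    apply Finset.sum_congr rfl; intro c _
    apply Finset.sum_congr rfl; intro b _
    -- B i c * T c b k' * B b s * T s j l' = B i c * B b s * T k' c b * T s j l'
    rw [hTbc c b k', hTab c k' b]
    ring
  have claim3 : ∀ k' l' : Fin n,
      ∑ s, (((1/2) * ∑ c, B s c * T c j k') * ((1/2) * ∑ b, B i b * T b s l'))
        = (1/4) * S l' k' := by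
    intro k' l'
    have expand : ∑ s, (((1/2) * ∑ c, B s c * T c j k') * ((1/2) * ∑ b, B i b * T b s l'))
        = (1/4) * ∑ s, ∑ c, ∑ b, B s c * T c j k' * B i b * T b s l' := by
      rw [Finset.mul_sum]
      apply Finset.sum_congr rfl
      intro s _
      rw [half_mul_half]
      congr 1
      apply Finset.sum_congr rfl
      intro c _
      apply Finset.sum_congr rfl
      intro b _
      ring
    rw [expand]
    congr 1
    rw [sum3_cycle (fun s c b => B s c * T c j k' * B i b * T b s l'), hS]
    apply Finset.sum_congr rfl; intro s _
    apply Finset.sum_congr rfl; intro c _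
    apply Finset.sum_congr rfl; intro b _
    -- B b s * T s j k' * B i c * T c b l' = B i c * B b s * T l' c b * T s j k'
    rw [hTbc c b l', hTab c l' b]
    ring
  have split1 : ∑ s, (((1/2) * ∑ c, B i c * T c s k) * ((1/2) * ∑ b, B s b * T b j l)
            - ((1/2) * ∑ c, B i c * T c s l) * ((1/2) * ∑ b, B s b * T b j k))
      = (1/4) * S k l - (1/4) * S l k := by
    rw [Finset.sum_sub_distrib, claim2 k l, claim2 l k]
  have split2 : ∑ s, (((1/2) * ∑ c, B s c * T c j k) * ((1/2) * ∑ b, B i b * T b s l)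
            - ((1/2) * ∑ c, B s c * T c j l) * ((1/2) * ∑ b, B i b * T b s k))
      = (1/4) * S l k - (1/4) * S k l := by
    rw [Finset.sum_sub_distrib, claim3 k l, claim3 l k]
  rw [claim1 k l, claim1 l k, split1, split2]
  ring

end PdAux

open PdAux in
/-- The curvature tensor of the Levi-Civita connection of `ĝ` on `ℝⁿ∖{0}` is
`R̂ⁱ_{jkl} = (1/F²)(Cˢ_{jk} Cⁱ_{sl} − Cˢ_{jl} Cⁱ_{sk})`. -/
theorem riem_eq_cartan_formula {n : ℕ} (F : (Fin n → ℝ) → ℝ)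
    (hF : IsMinkowskiNorm n F) :
    ∀ y : Fin n → ℝ, y ≠ 0 → ∀ i j k l : Fin n,
      riem (gF F) y i j k l =
        (1 / F y ^ 2) * ∑ s, (cartanMixed F y s j k * cartanMixed F y i s l -
          cartanMixed F y s j l * cartanMixed F y i s k) := by
  intro y hy i j k l
  have hFsm : ContDiffOn ℝ (⊤ : ℕ∞) F {z : Fin n → ℝ | z ≠ 0} := hF.smooth
  have hpos := hF.posdef
  have hFy : F y ≠ 0 := (hF.pos y hy).ne'
  -- abbreviations
  set B : Fin n → Fin n → ℝ := fun a b => ginv (gF F) y a b with hB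
  set T : Fin n → Fin n → Fin n → ℝ := fun a b c => Tg F y a b c with hT
  -- the derivative terms
  have E : ∀ k' l' : Fin n,
      pd k' (fun z => christoffel (gF F) z i j l') y
        = (1/2) * (∑ s, ((-∑ c, ∑ b, B i c * T k' c b * B b s) * T s j l'))
          + (1/2) * ∑ s, B i s * Qg F y k' s j l' := by
    intro k' l'
    rw [pd_christoffel hFsm hpos hy i j k' l']
    have h1 : ∑ s, (pd k' (fun z => ginv (gF F) z i s) y * Tg F y s j l'
          + ginv (gF F) y i s * Qg F y k' s j l')
        = (∑ s, ((-∑ c, ∑ b, B i c * T k' c b * B b s) * T s j l'))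
          + ∑ s, B i s * Qg F y k' s j l' := by
      rw [← Finset.sum_add_distrib]
      apply Finset.sum_congr rfl
      intro s _
      rw [pd_ginv hFsm hpos hy k' i s]
    rw [h1]
    ring
  have hQcancel : ∑ s, B i s * Qg F y k s j l = ∑ s, B i s * Qg F y l s j k :=
    Finset.sum_congr rfl fun s _ => by rw [Qg_swap14 hFsm hy k s j l]
  have hΓ : ∀ a b c : Fin n, christoffel (gF F) y a b c = (1/2) * ∑ s, B a s * T s b c :=
    fun a b c => christoffel_eq hFsm hy a b c
  -- left-hand side
  have hLHS : riem (gF F) y i j k l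
      = (1/2) * (∑ s, ((-∑ c, ∑ b, B i c * T k c b * B b s) * T s j l))
        - (1/2) * (∑ s, ((-∑ c, ∑ b, B i c * T l c b * B b s) * T s j k))
        + ∑ s, (((1/2) * ∑ c, B i c * T c s k) * ((1/2) * ∑ b, B s b * T b j l)
              - ((1/2) * ∑ c, B i c * T c s l) * ((1/2) * ∑ b, B s b * T b j k)) := by
    unfold riem
    rw [E k l, E l k, hQcancel]
    have h2 : ∑ s, (christoffel (gF F) y i s k * christoffel (gF F) y s j l -
          christoffel (gF F) y i s l * christoffel (gF F) y s j k)
        = ∑ s, (((1/2) * ∑ c, B i c * T c s k) * ((1/2) * ∑ b, B s b * T b j l)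
              - ((1/2) * ∑ c, B i c * T c s l) * ((1/2) * ∑ b, B s b * T b j k)) := by
      apply Finset.sum_congr rfl
      intro s _
      rw [hΓ i s k, hΓ s j l, hΓ i s l, hΓ s j k]
    rw [h2]
    ring
  -- right-hand side
  have hRHS : (1 / F y ^ 2) * ∑ s, (cartanMixed F y s j k * cartanMixed F y i s l -
          cartanMixed F y s j l * cartanMixed F y i s k)
      = ∑ s, (((1/2) * ∑ c, B s c * T c j k) * ((1/2) * ∑ b, B i b * T b s l)
            - ((1/2) * ∑ c, B s c * T c j l) * ((1/2) * ∑ b, B i b * T b s k)) := by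
    have h3 : ∀ a b c : Fin n, cartanMixed F y a b c = F y * christoffel (gF F) y a b c :=
      fun a b c => cartanMixed_eq hFsm hy a b c
    rw [Finset.mul_sum]
    apply Finset.sum_congr rfl
    intro s _
    rw [h3 s j k, h3 i s l, h3 s j l, h3 i s k, hΓ s j k, hΓ i s l, hΓ s j l, hΓ i s k]
    field_simp
  rw [hLHS, hRHS]
  exact core_algebra B T (fun a b => ginv_symm hFsm hy a b)
    (fun a b c => Tg_symm_ab hFsm hy a b c) (fun a b c => Tg_symm_bc hFsm hy a b c) i j k l
end

section
/- Let M be a hypersurface of the Riemannian manifold (ℝⁿ∖{0}, ĝ) induced by a Minkowski norm F, with unit normal ν, and suppose M is proper totally umbilical, i.e. the second fundamental form satisfies h(X,Y) = H g(X,Y) ν with mean curvature H nowhere zero. If M is not contained in any level set S(r) = {F = r}, then the function f(y) := ĝ(y, ν) is non-constant on M. -/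
open Set

namespace Aux

variable {n : ℕ}

lemma single_eq_smul (k : Fin n) (a : ℝ) :
    (Pi.single k a : Fin n → ℝ) = a • (Pi.single k (1:ℝ) : Fin n → ℝ) := by
  ext m
  by_cases h : m = k <;> simp [Pi.single_apply, h]

lemma fderiv_expand (u : (Fin n → ℝ) → ℝ) (y X : Fin n → ℝ) :
    fderiv ℝ u y X = ∑ k, X k * pd k u y := by
  conv_lhs => rw [show X = ∑ k, X k • (Pi.single k (1:ℝ) : Fin n → ℝ) by
    simp_rw [← single_eq_smul]; exact (Finset.univ_sum_single X).symm]
  rw [map_sum]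
  simp [pd, smul_eq_mul]

lemma contDiffOn_pd {u : (Fin n → ℝ) → ℝ}
    (hu : ContDiffOn ℝ (⊤ : ℕ∞) u {z : Fin n → ℝ | z ≠ 0}) (i : Fin n) :
    ContDiffOn ℝ (⊤ : ℕ∞) (pd i u) {z : Fin n → ℝ | z ≠ 0} := by
  have h1 : ContDiffOn ℝ (⊤ : ℕ∞) (fun z => fderiv ℝ u z) {z : Fin n → ℝ | z ≠ 0} :=
    hu.fderiv_of_isOpen isOpen_ne (by simp)
  exact (ContinuousLinearMap.apply ℝ ℝ (Pi.single i (1:ℝ))).contDiff.comp_contDiffOn h1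

lemma diffAt {u : (Fin n → ℝ) → ℝ}
    (hu : ContDiffOn ℝ (⊤ : ℕ∞) u {z : Fin n → ℝ | z ≠ 0}) {y : Fin n → ℝ} (hy : y ≠ 0) :
    DifferentiableAt ℝ u y :=
  ((hu.contDiffAt (isOpen_ne.mem_nhds hy)).differentiableAt (by simp))


lemma euler {m : ℤ} {u : (Fin n → ℝ) → ℝ}
    (hu : ContDiffOn ℝ (⊤ : ℕ∞) u {z : Fin n → ℝ | z ≠ 0})
    (hhom : ∀ lam : ℝ, 0 < lam → ∀ z : Fin n → ℝ, z ≠ 0 → u (lam • z) = lam ^ m * u z)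
    {y : Fin n → ℝ} (hy : y ≠ 0) :
    fderiv ℝ u y y = m * u y := by
  have hc : HasDerivAt (fun lam : ℝ => lam • y) y 1 := by
    simpa using (hasDerivAt_id (1:ℝ)).smul_const y
  have h1 : HasDerivAt (fun lam : ℝ => u (lam • y)) (fderiv ℝ u y y) 1 := by
    have hd : HasFDerivAt u (fderiv ℝ u y) ((1:ℝ) • y) := by
      rw [one_smul]; exact (diffAt hu hy).hasFDerivAt
    have := hd.comp_hasDerivAt 1 hc
    exact this
  have h2 : HasDerivAt (fun lam : ℝ => lam ^ m * u y) ((m : ℝ) * u y) 1 := by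
    have := (hasDerivAt_zpow m (1:ℝ) (Or.inl one_ne_zero)).mul_const (u y)
    simpa using this
  have hev : (fun lam : ℝ => lam ^ m * u y) =ᶠ[nhds (1:ℝ)] fun lam => u (lam • y) := by
    filter_upwards [eventually_gt_nhds (by norm_num : (0:ℝ) < 1)] with lam hlam
    exact (hhom lam hlam y hy).symm
  exact (h1.unique (h2.congr_of_eventuallyEq hev.symm))

lemma homog_pd {m : ℤ} {u : (Fin n → ℝ) → ℝ}
    (hu : ContDiffOn ℝ (⊤ : ℕ∞) u {z : Fin n → ℝ | z ≠ 0})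
    (hhom : ∀ lam : ℝ, 0 < lam → ∀ z : Fin n → ℝ, z ≠ 0 → u (lam • z) = lam ^ m * u z)
    (i : Fin n) :
    ∀ lam : ℝ, 0 < lam → ∀ z : Fin n → ℝ, z ≠ 0 →
      pd i u (lam • z) = lam ^ (m - 1) * pd i u z := by
  intro lam hlam z hz
  have hlz : lam • z ≠ 0 := smul_ne_zero (ne_of_gt hlam) hz
  have hsm : HasFDerivAt (fun w : Fin n → ℝ => lam • w)
      (lam • ContinuousLinearMap.id ℝ (Fin n → ℝ)) z :=
    (ContinuousLinearMap.id ℝ (Fin n → ℝ)).hasFDerivAt.const_smul lam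
  have hA : HasFDerivAt (fun w => u (lam • w))
      ((fderiv ℝ u (lam • z)).comp (lam • ContinuousLinearMap.id ℝ (Fin n → ℝ))) z :=
    (diffAt hu hlz).hasFDerivAt.comp z hsm
  have hB : HasFDerivAt (fun w => lam ^ m * u w) (lam ^ m • fderiv ℝ u z) z :=
    ((diffAt hu hz).hasFDerivAt).const_smul (lam ^ m)
  have hev : (fun w => lam ^ m * u w) =ᶠ[nhds z] fun w => u (lam • w) := by
    filter_upwards [isOpen_ne.mem_nhds hz] with w hw
    exact (hhom lam hlam w hw).symm
  have := hA.unique (hB.congr_of_eventuallyEq hev.symm)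
  have happ := congrArg (fun (L : (Fin n → ℝ) →L[ℝ] ℝ) => L (Pi.single i 1)) this
  simp only [ContinuousLinearMap.coe_comp', Function.comp,
    ContinuousLinearMap.smul_apply, ContinuousLinearMap.coe_smul',
    Pi.smul_apply, ContinuousLinearMap.coe_id', id_eq, smul_eq_mul] at happ
  have hlam0 : lam ≠ 0 := ne_of_gt hlam
  have : lam * pd i u (lam • z) = lam ^ m * pd i u z := by
    simpa [pd, map_smul, smul_eq_mul] using happ
  have h2 : pd i u (lam • z) = lam ^ m / lam * pd i u z := by
    field_simp at this ⊢
    linarith [this]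
  rw [h2, zpow_sub_one₀ hlam0, div_eq_mul_inv]

lemma pd_swap {u : (Fin n → ℝ) → ℝ}
    (hu : ContDiffOn ℝ (⊤ : ℕ∞) u {z : Fin n → ℝ | z ≠ 0})
    {y : Fin n → ℝ} (hy : y ≠ 0) (i k : Fin n) :
    pd k (pd i u) y = pd i (pd k u) y := by
  have hmem : {z : Fin n → ℝ | z ≠ 0} ∈ nhds y := isOpen_ne.mem_nhds hy
  have hca : ContDiffAt ℝ 2 u y := (hu.contDiffAt hmem).of_le (WithTop.coe_le_coe.mpr le_top)
  have hsymm := hca.isSymmSndFDerivAt (by simp [minSmoothness_of_isRCLikeNormedField])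
  have hdf : DifferentiableAt ℝ (fderiv ℝ u) y :=
    ((hu.fderiv_of_isOpen (m := 1) isOpen_ne (WithTop.coe_le_coe.mpr le_top)).contDiffAt hmem).differentiableAt one_ne_zero
  have key : ∀ a b : Fin n,
      pd a (pd b u) y = fderiv ℝ (fderiv ℝ u) y (Pi.single a 1) (Pi.single b 1) := by
    intro a b
    have hcomp : HasFDerivAt (fun z => fderiv ℝ u z (Pi.single b (1:ℝ)))
        ((ContinuousLinearMap.apply ℝ ℝ (Pi.single b (1:ℝ))).comp
          (fderiv ℝ (fderiv ℝ u) y)) y :=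
      ((ContinuousLinearMap.apply ℝ ℝ (Pi.single b (1:ℝ))).hasFDerivAt.comp y
        hdf.hasFDerivAt :)
    simp only [pd]
    have : (fun z => fderiv ℝ (fun z' => fderiv ℝ u z' (Pi.single b (1:ℝ))) z)
        = fun z => fderiv ℝ (fun z' => fderiv ℝ u z' (Pi.single b (1:ℝ))) z := rfl
    rw [show (fderiv ℝ (pd b u) y) = fderiv ℝ (fun z => fderiv ℝ u z (Pi.single b (1:ℝ))) y
      from rfl, hcomp.fderiv]
    rfl
  rw [key k i, key i k, hsymm]

end Aux


/-- If `M` is a proper totally umbilical hypersurface of `(ℝⁿ∖{0}, ĝ)`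
(mean curvature `H` nowhere zero) which is not contained in any level set `S(r)`, then the
function `f(y) = ĝ(y, ν)` is non-constant on `M`. -/
theorem support_function_nonconstant {n : ℕ} (F : (Fin n → ℝ) → ℝ)
    (hF : IsMinkowskiNorm n F) (M : Set (Fin n → ℝ))
    (ν : (Fin n → ℝ) → Fin n → ℝ) (H : (Fin n → ℝ) → ℝ)
    (hM0 : ∀ y ∈ M, y ≠ (0 : Fin n → ℝ))
    (hhyp : IsHypersurface n (gF F) M ν)
    (humb : TotallyUmbilical (gF F) M ν H)
    (hH : ∀ y ∈ M, H y ≠ 0)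
    (hlevel : ¬ ∃ r : ℝ, 0 < r ∧ ∀ y ∈ M, F y = r) :
    ¬ ∃ c : ℝ, ∀ y ∈ M, gmet (gF F) y y (ν y) = c := by
  rintro ⟨c₀, hconst⟩
  apply hlevel
  classical
  obtain ⟨U, hUo, hMU, hν⟩ := hhyp.smooth_nu
  set S : Set (Fin n → ℝ) := {z | z ≠ 0} with hS
  have hsE : ContDiffOn ℝ (⊤ : ℕ∞) (fun z : Fin n → ℝ => F z ^ 2) S := hF.smooth.pow 2
  have hhE : ∀ lam : ℝ, 0 < lam → ∀ z : Fin n → ℝ, z ≠ 0 →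
      (fun z : Fin n → ℝ => F z ^ 2) (lam • z) = lam ^ (2:ℤ) * (fun z : Fin n → ℝ => F z ^ 2) z := by
    intro lam hlam z _
    simp only [hF.homog lam hlam z, zpow_two]
    ring
  have hs1 : ∀ j, ContDiffOn ℝ (⊤ : ℕ∞) (pd j (fun z : Fin n → ℝ => F z ^ 2)) S :=
    fun j => Aux.contDiffOn_pd hsE j
  have hh1 : ∀ j, ∀ lam : ℝ, 0 < lam → ∀ z : Fin n → ℝ, z ≠ 0 →
      pd j (fun z : Fin n → ℝ => F z ^ 2) (lam • z)
        = lam ^ (1:ℤ) * pd j (fun z : Fin n → ℝ => F z ^ 2) z := by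
    intro j lam hlam z hz
    have := Aux.homog_pd hsE hhE j lam hlam z hz
    norm_num at this ⊢
    exact this
  have hs2 : ∀ i j, ContDiffOn ℝ (⊤ : ℕ∞) (pd i (pd j (fun z : Fin n → ℝ => F z ^ 2))) S :=
    fun i j => Aux.contDiffOn_pd (hs1 j) i
  have hh2 : ∀ i j, ∀ lam : ℝ, 0 < lam → ∀ z : Fin n → ℝ, z ≠ 0 →
      pd i (pd j (fun z : Fin n → ℝ => F z ^ 2)) (lam • z)
        = lam ^ (0:ℤ) * pd i (pd j (fun z : Fin n → ℝ => F z ^ 2)) z := by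
    intro i j lam hlam z hz
    have := Aux.homog_pd (hs1 j) (hh1 j) i lam hlam z hz
    norm_num at this ⊢
    exact this
  have hsg : ∀ i j, ContDiffOn ℝ (⊤ : ℕ∞) (fun z => gF F z i j) S := by
    intro i j
    simp only [gF]
    exact (hs2 i j).div_const 2
  have hhg : ∀ i j, ∀ lam : ℝ, 0 < lam → ∀ z : Fin n → ℝ, z ≠ 0 →
      (fun z => gF F z i j) (lam • z) = lam ^ (0:ℤ) * (fun z => gF F z i j) z := by
    intro i j lam hlam z hz
    simp only [gF]
    rw [hh2 i j lam hlam z hz]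
    ring
  -- main claim
  have main : ∀ y ∈ M, F y = |c₀| := by
    intro y hyM
    have hy : y ≠ 0 := hM0 y hyM
    -- pd of gF in terms of third derivatives of F²
    have hpdg : ∀ k i j, pd k (fun z => gF F z i j) y
        = pd k (pd i (pd j (fun z : Fin n → ℝ => F z ^ 2))) y / 2 := by
      intro k i j
      have hdiff : DifferentiableAt ℝ (pd i (pd j (fun z : Fin n → ℝ => F z ^ 2))) y :=
        Aux.diffAt (hs2 i j) hy
      have : (fun z => gF F z i j)
          = fun z => pd i (pd j (fun z : Fin n → ℝ => F z ^ 2)) z * (2:ℝ)⁻¹ := by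
        funext z
        simp [gF, div_eq_mul_inv]
      rw [show pd k (fun z => gF F z i j) y
        = fderiv ℝ (fun z => gF F z i j) y (Pi.single k 1) from rfl, this]
      rw [fderiv_mul_const hdiff]
      simp [pd, div_eq_mul_inv, mul_comm]
    -- Euler-type identity: contraction of y with a derivative of g vanishes
    have key1 : ∀ k j, ∑ i, y i * pd k (fun z => gF F z i j) y = 0 := by
      intro k j
      have hswap : ∀ i, pd k (pd i (pd j (fun z : Fin n → ℝ => F z ^ 2))) y
          = pd i (pd k (pd j (fun z : Fin n → ℝ => F z ^ 2))) y :=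
        fun i => Aux.pd_swap (hs1 j) hy i k
      have heuler : fderiv ℝ (pd k (pd j (fun z : Fin n → ℝ => F z ^ 2))) y y
          = ((0:ℤ) : ℝ) * pd k (pd j (fun z : Fin n → ℝ => F z ^ 2)) y :=
        Aux.euler (hs2 k j) (hh2 k j) hy
      have hzero : ∑ i, y i * pd i (pd k (pd j (fun z : Fin n → ℝ => F z ^ 2))) y = 0 := by
        rw [← Aux.fderiv_expand, heuler]
        norm_num
      calc ∑ i, y i * pd k (fun z => gF F z i j) y
          = ∑ i, y i * (pd i (pd k (pd j (fun z : Fin n → ℝ => F z ^ 2))) y / 2) := by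
            exact Finset.sum_congr rfl fun i _ => by rw [hpdg, hswap]
        _ = (∑ i, y i * pd i (pd k (pd j (fun z : Fin n → ℝ => F z ^ 2))) y) / 2 := by
            rw [Finset.sum_div]
            exact Finset.sum_congr rfl fun i _ => by ring
        _ = 0 := by rw [hzero]; norm_num
    have key1' : ∀ a b, ∑ s, y s * pd s (fun z => gF F z a b) y = 0 := by
      intro a b
      rw [← Aux.fderiv_expand, Aux.euler (hsg a b) (hhg a b) hy]
      norm_num
    -- contraction of metric with y
    have hq : ∀ j, ∑ i, gF F y i j * y i = pd j (fun z : Fin n → ℝ => F z ^ 2) y / 2 := by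
      intro j
      have heuler : fderiv ℝ (pd j (fun z : Fin n → ℝ => F z ^ 2)) y y
          = ((1:ℤ) : ℝ) * pd j (fun z : Fin n → ℝ => F z ^ 2) y :=
        Aux.euler (hs1 j) (hh1 j) hy
      calc ∑ i, gF F y i j * y i
          = (∑ i, y i * pd i (pd j (fun z : Fin n → ℝ => F z ^ 2)) y) / 2 := by
            rw [Finset.sum_div]
            exact Finset.sum_congr rfl fun i _ => by simp [gF]; ring
        _ = pd j (fun z : Fin n → ℝ => F z ^ 2) y / 2 := by
            rw [← Aux.fderiv_expand, heuler]; norm_num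
    -- the metric matrix is invertible
    have hdet : IsUnit (Matrix.of (gF F y)).det := by
      rw [isUnit_iff_ne_zero]
      intro h0
      obtain ⟨v, hv0, hvz⟩ := Matrix.exists_mulVec_eq_zero_iff.mpr h0
      have hpos := hF.posdef y hy v hv0
      have hzero : gmet (gF F) y v v = 0 := by
        have hmv : ∀ i, ∑ j, gF F y i j * v j = 0 := by
          intro i
          have := congrFun hvz i
          simpa [Matrix.mulVec, dotProduct] using this
        calc gmet (gF F) y v v = ∑ i, v i * ∑ j, gF F y i j * v j := by
              simp only [gmet, Finset.mul_sum]
              exact Finset.sum_congr rfl fun i _ => Finset.sum_congr rfl fun j _ => by ring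
          _ = 0 := by simp [hmv]
      rw [hzero] at hpos
      exact lt_irrefl 0 hpos
    have hInv : Matrix.of (gF F y) * ginv (gF F) y = 1 :=
      Matrix.mul_nonsing_inv _ hdet
    have hqinv : ∀ s, ∑ j, (∑ i, gF F y i j * y i) * ginv (gF F) y j s = y s := by
      intro s
      have hentry : ∀ i, ∑ j, gF F y i j * ginv (gF F) y j s
          = if i = s then (1:ℝ) else 0 := by
        intro i
        have := congrFun (congrFun hInv i) s
        simpa [Matrix.mul_apply, Matrix.one_apply] using this
      calc ∑ j, (∑ i, gF F y i j * y i) * ginv (gF F) y j s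
          = ∑ j, ∑ i, y i * (gF F y i j * ginv (gF F) y j s) := by
            exact Finset.sum_congr rfl fun j _ => by
              rw [Finset.sum_mul]
              exact Finset.sum_congr rfl fun i _ => by ring
        _ = ∑ i, y i * ∑ j, gF F y i j * ginv (gF F) y j s := by
            rw [Finset.sum_comm]
            exact Finset.sum_congr rfl fun i _ => by rw [Finset.mul_sum]
        _ = y s := by
            simp only [hentry, mul_ite, mul_one, mul_zero]
            simp
    -- contraction of y with Christoffel symbols vanishes
    have key2 : ∀ a b, ∑ j, (∑ i, gF F y i j * y i) * christoffel (gF F) y j a b = 0 := by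
      intro a b
      have hTs : ∀ s, y s * (pd b (fun z => gF F z s a) y + pd a (fun z => gF F z s b) y
          - pd s (fun z => gF F z a b) y)
          = y s * pd b (fun z => gF F z s a) y + y s * pd a (fun z => gF F z s b) y
            - y s * pd s (fun z => gF F z a b) y := fun s => by ring
      have hstep : ∀ j, (∑ i, gF F y i j * y i) * christoffel (gF F) y j a b
          = ∑ s, ((∑ i, gF F y i j * y i) * ginv (gF F) y j s) * ((1/2) *
              (pd b (fun z => gF F z s a) y + pd a (fun z => gF F z s b) y
                - pd s (fun z => gF F z a b) y)) := by
        intro j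
        simp only [christoffel]
        rw [Finset.mul_sum, Finset.mul_sum]
        exact Finset.sum_congr rfl fun s _ => by ring
      calc ∑ j, (∑ i, gF F y i j * y i) * christoffel (gF F) y j a b
          = ∑ j, ∑ s, ((∑ i, gF F y i j * y i) * ginv (gF F) y j s) * ((1/2) *
              (pd b (fun z => gF F z s a) y + pd a (fun z => gF F z s b) y
                - pd s (fun z => gF F z a b) y)) :=
            Finset.sum_congr rfl fun j _ => hstep j
        _ = ∑ s, (∑ j, (∑ i, gF F y i j * y i) * ginv (gF F) y j s) * ((1/2) *
              (pd b (fun z => gF F z s a) y + pd a (fun z => gF F z s b) y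
                - pd s (fun z => gF F z a b) y)) := by
            rw [Finset.sum_comm]
            exact Finset.sum_congr rfl fun s _ => (Finset.sum_mul _ _ _).symm
        _ = ∑ s, y s * ((1/2) *
              (pd b (fun z => gF F z s a) y + pd a (fun z => gF F z s b) y
                - pd s (fun z => gF F z a b) y)) :=
            Finset.sum_congr rfl fun s _ => by rw [hqinv s]
        _ = (1/2) * ((∑ s, y s * pd b (fun z => gF F z s a) y)
              + (∑ s, y s * pd a (fun z => gF F z s b) y)
              - (∑ s, y s * pd s (fun z => gF F z a b) y)) := by
            rw [← Finset.sum_add_distrib, ← Finset.sum_sub_distrib, Finset.mul_sum]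
            exact Finset.sum_congr rfl fun s _ => by ring
        _ = 0 := by
            rw [key1 b a, key1 a b, key1' a b]
            norm_num
    -- tangent derivative of F² vanishes
    have tangent_zero : ∀ X : Fin n → ℝ, gmet (gF F) y X (ν y) = 0 →
        gmet (gF F) y y X = 0 := by
      intro X hX
      obtain ⟨c, ε, hε, hcsm, hc0, hder, hcM⟩ := hhyp.curve y hyM X hX
      have hub := humb y hyM X hX
      have hyU : y ∈ U := hMU hyM
      have hνd : ∀ j, DifferentiableAt ℝ (fun z => ν z j) y := fun j =>
        ((hν j).contDiffAt (hUo.mem_nhds hyU)).differentiableAt (by simp)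
      have hcd : HasDerivAt c X 0 := by
        have h := ((hcsm.differentiable (by simp)) 0).hasDerivAt
        rwa [hder] at h
      have hB : ∀ i, HasDerivAt (fun t => c t i) (X i) 0 := by
        intro i
        have := (ContinuousLinearMap.proj (R := ℝ) (φ := fun _ : Fin n => ℝ)
          i).hasFDerivAt.comp_hasDerivAt 0 hcd
        exact this
      have hA : ∀ i j, HasDerivAt (fun t => gF F (c t) i j)
          (fderiv ℝ (fun z => gF F z i j) y X) 0 := by
        intro i j
        have hd : HasFDerivAt (fun z => gF F z i j)
            (fderiv ℝ (fun z => gF F z i j) y) (c 0) := by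
          rw [hc0]; exact (Aux.diffAt (hsg i j) hy).hasFDerivAt
        exact hd.comp_hasDerivAt 0 hcd
      have hC : ∀ j, HasDerivAt (fun t => ν (c t) j)
          (fderiv ℝ (fun z => ν z j) y X) 0 := by
        intro j
        have hd : HasFDerivAt (fun z => ν z j) (fderiv ℝ (fun z => ν z j) y) (c 0) := by
          rw [hc0]; exact (hνd j).hasFDerivAt
        exact hd.comp_hasDerivAt 0 hcd
      have hΦ : HasDerivAt (fun t => gmet (gF F) (c t) (c t) (ν (c t)))
          (∑ i, ∑ j, ((fderiv ℝ (fun z => gF F z i j) y X * y i + gF F y i j * X i) * ν y j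
            + gF F y i j * y i * fderiv ℝ (fun z => ν z j) y X)) 0 := by
        simp only [gmet]
        refine HasDerivAt.fun_sum fun i _ => HasDerivAt.fun_sum fun j _ => ?_
        have h1 := ((hA i j).fun_mul (hB i)).fun_mul (hC j)
        simp only [hc0] at h1
        exact h1
      have hev : (fun t => gmet (gF F) (c t) (c t) (ν (c t))) =ᶠ[nhds (0:ℝ)]
          fun _ => c₀ := by
        filter_upwards [Metric.ball_mem_nhds (0:ℝ) hε] with t ht
        rw [Metric.mem_ball, Real.dist_eq, sub_zero] at ht
        exact hconst _ (hcM t ht)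
      have hD0 : (∑ i, ∑ j, ((fderiv ℝ (fun z => gF F z i j) y X * y i + gF F y i j * X i) * ν y j
            + gF F y i j * y i * fderiv ℝ (fun z => ν z j) y X)) = 0 := by
        rw [← hΦ.deriv, hev.deriv_eq]
        simp
      have hsplit : (∑ i, ∑ j, ((fderiv ℝ (fun z => gF F z i j) y X * y i + gF F y i j * X i) * ν y j
            + gF F y i j * y i * fderiv ℝ (fun z => ν z j) y X))
          = (∑ i, ∑ j, fderiv ℝ (fun z => gF F z i j) y X * y i * ν y j)
            + gmet (gF F) y X (ν y)
            + (∑ i, ∑ j, gF F y i j * y i * fderiv ℝ (fun z => ν z j) y X) := by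
        simp only [gmet, ← Finset.sum_add_distrib]
        exact Finset.sum_congr rfl fun i _ => Finset.sum_congr rfl fun j _ => by ring
      have hT1 : (∑ i, ∑ j, fderiv ℝ (fun z => gF F z i j) y X * y i * ν y j) = 0 := by
        have hexp : ∀ i j, fderiv ℝ (fun z => gF F z i j) y X * y i * ν y j
            = ∑ k, X k * ν y j * (y i * pd k (fun z => gF F z i j) y) := by
          intro i j
          rw [Aux.fderiv_expand, Finset.sum_mul, Finset.sum_mul]
          exact Finset.sum_congr rfl fun k _ => by ring
        calc (∑ i, ∑ j, fderiv ℝ (fun z => gF F z i j) y X * y i * ν y j)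
            = ∑ i, ∑ j, ∑ k, X k * ν y j * (y i * pd k (fun z => gF F z i j) y) :=
              Finset.sum_congr rfl fun i _ => Finset.sum_congr rfl fun j _ => hexp i j
          _ = ∑ j, ∑ k, ∑ i, X k * ν y j * (y i * pd k (fun z => gF F z i j) y) := by
              rw [Finset.sum_comm]
              exact Finset.sum_congr rfl fun j _ => by rw [Finset.sum_comm]
          _ = 0 := by
              refine Finset.sum_eq_zero fun j _ => Finset.sum_eq_zero fun k _ => ?_
              rw [← Finset.mul_sum, key1 k j, mul_zero]
      have hw : ∀ j, fderiv ℝ (fun z => ν z j) y X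
          = -(H y) * X j - ∑ a, ∑ b, christoffel (gF F) y j a b * X a * ν y b := by
        intro j
        have h := congrFun hub j
        simp only [covVec, Pi.smul_apply, Pi.neg_apply, smul_eq_mul, neg_mul] at h
        linarith [h]
      have hinner : ∀ a b, (∑ i, ∑ j, gF F y i j * y i * christoffel (gF F) y j a b) = 0 := by
        intro a b
        rw [Finset.sum_comm]
        rw [show (∑ j, ∑ i, gF F y i j * y i * christoffel (gF F) y j a b)
            = ∑ j, (∑ i, gF F y i j * y i) * christoffel (gF F) y j a b from
          Finset.sum_congr rfl fun j _ => (Finset.sum_mul _ _ _).symm]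
        exact key2 a b
      have hGam : (∑ i, ∑ j, ∑ a, ∑ b,
          (X a * ν y b) * (gF F y i j * y i * christoffel (gF F) y j a b)) = 0 := by
        calc (∑ i, ∑ j, ∑ a, ∑ b,
            (X a * ν y b) * (gF F y i j * y i * christoffel (gF F) y j a b))
            = ∑ i, ∑ a, ∑ b, ∑ j,
              (X a * ν y b) * (gF F y i j * y i * christoffel (gF F) y j a b) :=
              Finset.sum_congr rfl fun i _ => by
                rw [Finset.sum_comm]
                exact Finset.sum_congr rfl fun a _ => by rw [Finset.sum_comm]
          _ = ∑ a, ∑ b, ∑ i, ∑ j,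
              (X a * ν y b) * (gF F y i j * y i * christoffel (gF F) y j a b) := by
              rw [Finset.sum_comm]
              exact Finset.sum_congr rfl fun a _ => by rw [Finset.sum_comm]
          _ = 0 := by
              refine Finset.sum_eq_zero fun a _ => Finset.sum_eq_zero fun b _ => ?_
              simp only [← Finset.mul_sum]
              rw [hinner a b, mul_zero]
      have hT3 : (∑ i, ∑ j, gF F y i j * y i * fderiv ℝ (fun z => ν z j) y X)
          = -(H y) * gmet (gF F) y y X := by
        calc (∑ i, ∑ j, gF F y i j * y i * fderiv ℝ (fun z => ν z j) y X)
            = ∑ i, ∑ j, (-(H y) * (gF F y i j * y i * X j)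
                - ∑ a, ∑ b, (X a * ν y b) * (gF F y i j * y i * christoffel (gF F) y j a b)) := by
              refine Finset.sum_congr rfl fun i _ => Finset.sum_congr rfl fun j _ => ?_
              rw [hw j, mul_sub]
              congr 1
              · ring
              · rw [Finset.mul_sum]
                refine Finset.sum_congr rfl fun a _ => ?_
                rw [Finset.mul_sum]
                exact Finset.sum_congr rfl fun b _ => by ring
          _ = -(H y) * (∑ i, ∑ j, gF F y i j * y i * X j)
              - (∑ i, ∑ j, ∑ a, ∑ b,
                (X a * ν y b) * (gF F y i j * y i * christoffel (gF F) y j a b)) := by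
              simp only [Finset.sum_sub_distrib, ← Finset.mul_sum]
          _ = -(H y) * gmet (gF F) y y X := by
              rw [hGam, sub_zero]
              rfl
      have hfin := hD0
      rw [hsplit, hT1, hT3, hX] at hfin
      have h2 : H y * gmet (gF F) y y X = 0 := by linarith [hfin]
      exact (mul_eq_zero.mp h2).resolve_left (hH y hyM)
    -- symmetry of the metric at y
    have hgsym : ∀ i j, gF F y i j = gF F y j i := by
      intro i j
      simp only [gF]
      rw [Aux.pd_swap hsE hy j i]
    -- conclude y = c₀ • ν y
    have hunit : gmet (gF F) y (ν y) (ν y) = 1 := hhyp.unit y hyM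
    have hcval : gmet (gF F) y y (ν y) = c₀ := hconst y hyM
    set w : Fin n → ℝ := y - c₀ • ν y with hw
    have hwi : ∀ i, w i = y i - c₀ * ν y i := fun i => rfl
    have hsub : ∀ v : Fin n → ℝ, gmet (gF F) y w v
        = gmet (gF F) y y v - c₀ * gmet (gF F) y (ν y) v := by
      intro v
      simp only [gmet, Finset.mul_sum, ← Finset.sum_sub_distrib]
      refine Finset.sum_congr rfl fun i _ => Finset.sum_congr rfl fun j _ => ?_
      rw [hwi i]
      ring
    have hsub2 : ∀ v : Fin n → ℝ, gmet (gF F) y v w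
        = gmet (gF F) y v y - c₀ * gmet (gF F) y v (ν y) := by
      intro v
      simp only [gmet, Finset.mul_sum, ← Finset.sum_sub_distrib]
      refine Finset.sum_congr rfl fun i _ => Finset.sum_congr rfl fun j _ => ?_
      rw [hwi j]
      ring
    have hwtan : gmet (gF F) y w (ν y) = 0 := by
      rw [hsub (ν y), hcval, hunit]; ring
    have hyw : gmet (gF F) y y w = 0 := tangent_zero w hwtan
    have hsymm2 : gmet (gF F) y (ν y) w = gmet (gF F) y w (ν y) := by
      simp only [gmet]
      rw [Finset.sum_comm]
      refine Finset.sum_congr rfl fun i _ => Finset.sum_congr rfl fun j _ => ?_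
      rw [hgsym j i]
      ring
    have hww : gmet (gF F) y w w = 0 := by
      rw [hsub w, hyw, hsymm2, hwtan]
      ring
    have hw0 : w = 0 := by
      by_contra hne
      have := hF.posdef y hy w hne
      rw [hww] at this
      exact lt_irrefl 0 this
    have hyc : ∀ i, y i = c₀ * ν y i := by
      intro i
      have := congrFun hw0 i
      rw [hwi i] at this
      simpa [sub_eq_zero] using this
    -- F y ^ 2 = gmet y y y = c₀ ^ 2
    have hEy : F y ^ 2 = gmet (gF F) y y y := by
      have heuler : fderiv ℝ (fun z : Fin n → ℝ => F z ^ 2) y y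
          = ((2:ℤ) : ℝ) * F y ^ 2 := Aux.euler hsE hhE hy
      calc F y ^ 2 = (fderiv ℝ (fun z : Fin n → ℝ => F z ^ 2) y y) / 2 := by
            rw [heuler]; norm_num
        _ = (∑ j, y j * pd j (fun z : Fin n → ℝ => F z ^ 2) y) / 2 := by
            rw [Aux.fderiv_expand]
        _ = ∑ j, (∑ i, gF F y i j * y i) * y j := by
            rw [Finset.sum_div]
            refine Finset.sum_congr rfl fun j _ => ?_
            rw [hq j]; ring
        _ = gmet (gF F) y y y := by
            simp only [gmet]
            rw [Finset.sum_comm]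
            exact Finset.sum_congr rfl fun j _ => by rw [Finset.sum_mul]
    have hyyy : gmet (gF F) y y y = c₀ * c₀ := by
      have : gmet (gF F) y y y = c₀ * gmet (gF F) y y (ν y) := by
        simp only [gmet, Finset.mul_sum]
        refine Finset.sum_congr rfl fun i _ => ?_
        refine Finset.sum_congr rfl fun j _ => ?_
        rw [hyc j]
        ring
      rw [this, hcval]
    have : F y ^ 2 = |c₀| ^ 2 := by rw [hEy, hyyy, sq_abs]; ring
    calc F y = Real.sqrt (F y ^ 2) := (Real.sqrt_sq (hF.nonneg y)).symm
      _ = Real.sqrt (|c₀| ^ 2) := by rw [this]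
      _ = |c₀| := Real.sqrt_sq (abs_nonneg c₀)
  obtain ⟨y₀, hy₀⟩ := hhyp.nonempty
  have h0 : 0 < |c₀| := by
    rw [← main y₀ hy₀]
    exact hF.pos y₀ (hM0 y₀ hy₀)
  exact ⟨|c₀|, h0, main⟩
end

section
/- Let (ℝⁿ, F), n ≥ 3, be a Minkowski space with F absolutely homogeneous (F(λy) = |λ|F(y)). Then F is induced by an inner product on ℝⁿ if and only if there exists a nonzero constant vector field b on ℝⁿ∖{0} that is parallel with respect to the Levi-Civita connection ∇̂ of the induced Riemannian metric ĝ. -/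
open Set

/-- any continuous linear functional on ℝⁿ splits over coordinates. -/
lemma clm_sum_coords {n : ℕ} (L : (Fin n → ℝ) →L[ℝ] ℝ) (v : Fin n → ℝ) :
    L v = ∑ i, v i * L (Pi.single i 1) := by
  have hv : v = ∑ i, v i • (Pi.single i 1 : Fin n → ℝ) := by
    funext x
    simp [Finset.sum_apply, Pi.single_apply]
  calc L v = L (∑ i, v i • (Pi.single i 1 : Fin n → ℝ)) := by rw [← hv]
    _ = ∑ i, v i * L (Pi.single i 1) := by
        rw [map_sum]
        simp

lemma fderiv_eq_sum_pd {n : ℕ} (f : (Fin n → ℝ) → ℝ) (y v : Fin n → ℝ) :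
    fderiv ℝ f y v = ∑ i, v i * pd i f y := by
  simpa [pd] using clm_sum_coords (fderiv ℝ f y) v

/-- smoothness of pd on an open set -/
lemma pd_contDiffOn {n : ℕ} {f : (Fin n → ℝ) → ℝ} {s : Set (Fin n → ℝ)}
    (hs : IsOpen s) (hf : ContDiffOn ℝ (⊤ : ℕ∞) f s) (i : Fin n) :
    ContDiffOn ℝ (⊤ : ℕ∞) (pd i f) s := by
  have h := hf.fderiv_of_isOpen (m := (⊤ : ℕ∞)) hs (by simp)
  exact h.clm_apply contDiffOn_const

section Homog

variable {n : ℕ} {u : (Fin n → ℝ) → ℝ}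

lemma omega_ne : ∀ y : Fin n → ℝ, y ≠ 0 → {z : Fin n → ℝ | z ≠ 0} ∈ nhds y := by
  intro y hy
  exact (isOpen_compl_singleton (x := (0 : Fin n → ℝ))).mem_nhds hy

lemma diffAt_of_smoothOn (hu : ContDiffOn ℝ (⊤ : ℕ∞) u {z : Fin n → ℝ | z ≠ 0})
    {y : Fin n → ℝ} (hy : y ≠ 0) : DifferentiableAt ℝ u y := by
  have := hu.contDiffAt (omega_ne y hy)
  exact this.differentiableAt (by simp)

/-- chain rule for scaling: fderiv of z ↦ f (λ•z). -/
lemma fderiv_smul_comp {f : (Fin n → ℝ) → ℝ} {lam : ℝ} {y : Fin n → ℝ}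
    (hf : DifferentiableAt ℝ f (lam • y)) (i : Fin n) :
    fderiv ℝ (fun z => f (lam • z)) y (Pi.single i 1) = lam * pd i f (lam • y) := by
  have hs : HasFDerivAt (fun z : Fin n → ℝ => lam • z)
      (lam • ContinuousLinearMap.id ℝ (Fin n → ℝ)) y := (hasFDerivAt_id y).const_smul lam
  have h := (hf.hasFDerivAt.comp y hs).fderiv
  have h2 : fderiv ℝ (fun z => f (lam • z)) y =
      (fderiv ℝ f (lam • y)).comp (lam • ContinuousLinearMap.id ℝ (Fin n → ℝ)) := h
  rw [h2]
  simp [pd, ContinuousLinearMap.smul_apply, mul_comm]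

lemma pd_homog (hu : ContDiffOn ℝ (⊤ : ℕ∞) u {z : Fin n → ℝ | z ≠ 0})
    (hhom : ∀ (lam : ℝ) (z : Fin n → ℝ), u (lam • z) = lam ^ 2 * u z)
    {lam : ℝ} (hl : lam ≠ 0) {y : Fin n → ℝ} (hy : y ≠ 0) (i : Fin n) :
    pd i u (lam • y) = lam * pd i u y := by
  have hly : lam • y ≠ 0 := smul_ne_zero hl hy
  have hd : DifferentiableAt ℝ u (lam • y) := diffAt_of_smoothOn hu hly
  have hdy : DifferentiableAt ℝ u y := diffAt_of_smoothOn hu hy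
  have hfe : (fun z : Fin n → ℝ => u (lam • z)) = fun z => lam ^ 2 * u z := by
    funext z; exact hhom lam z
  have h1 : fderiv ℝ (fun z => u (lam • z)) y (Pi.single i 1) = lam * pd i u (lam • y) :=
    fderiv_smul_comp hd i
  have h2 : fderiv ℝ (fun z : Fin n → ℝ => lam ^ 2 * u z) y (Pi.single i 1)
      = lam ^ 2 * pd i u y := by
    rw [fderiv_const_mul hdy]; simp [pd]
  rw [hfe] at h1
  rw [h2] at h1
  exact mul_left_cancel₀ hl (by rw [← h1]; ring)

lemma pd_pd_homog (hu : ContDiffOn ℝ (⊤ : ℕ∞) u {z : Fin n → ℝ | z ≠ 0})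
    (hhom : ∀ (lam : ℝ) (z : Fin n → ℝ), u (lam • z) = lam ^ 2 * u z)
    {lam : ℝ} (hl : lam ≠ 0) {y : Fin n → ℝ} (hy : y ≠ 0) (i j : Fin n) :
    pd i (pd j u) (lam • y) = pd i (pd j u) y := by
  have hly : lam • y ≠ 0 := smul_ne_zero hl hy
  have hw : ContDiffOn ℝ (⊤ : ℕ∞) (pd j u) {z : Fin n → ℝ | z ≠ 0} :=
    pd_contDiffOn (isOpen_compl_singleton) hu j
  have hd : DifferentiableAt ℝ (pd j u) (lam • y) := diffAt_of_smoothOn hw hly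
  have hdy : DifferentiableAt ℝ (pd j u) y := diffAt_of_smoothOn hw hy
  -- the two functions agree on a nbhd of y
  have hfe : (fun z : Fin n → ℝ => pd j u (lam • z)) =ᶠ[nhds y]
      (fun z => lam * pd j u z) := by
    filter_upwards [omega_ne y hy] with z hz
    exact pd_homog hu hhom hl hz j
  have h1 : fderiv ℝ (fun z => pd j u (lam • z)) y (Pi.single i 1)
      = lam * pd i (pd j u) (lam • y) := fderiv_smul_comp hd i
  have h2 : fderiv ℝ (fun z : Fin n → ℝ => lam * pd j u z) y (Pi.single i 1)
      = lam * pd i (pd j u) y := by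
    rw [fderiv_const_mul hdy]; simp [pd]
  rw [hfe.fderiv_eq, h2] at h1
  exact mul_left_cancel₀ hl h1.symm

lemma euler1 (hu : ContDiffOn ℝ (⊤ : ℕ∞) u {z : Fin n → ℝ | z ≠ 0})
    (hhom : ∀ (lam : ℝ) (z : Fin n → ℝ), u (lam • z) = lam ^ 2 * u z)
    {y : Fin n → ℝ} (hy : y ≠ 0) :
    fderiv ℝ u y y = 2 * u y := by
  have hdy : DifferentiableAt ℝ u y := diffAt_of_smoothOn hu hy
  have hc : HasDerivAt (fun lam : ℝ => lam • y) y 1 := by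
    simpa using (hasDerivAt_id (1:ℝ)).smul_const y
  have h1 : HasDerivAt (fun lam : ℝ => u (lam • y)) (fderiv ℝ u y y) 1 := by
    have hd1 : HasFDerivAt u (fderiv ℝ u y) ((1:ℝ) • y) := by
      rw [one_smul]; exact hdy.hasFDerivAt
    exact hd1.comp_hasDerivAt 1 hc
  have h2 : HasDerivAt (fun lam : ℝ => lam ^ 2 * u y) (2 * u y) 1 := by
    simpa using (hasDerivAt_pow 2 (1:ℝ)).mul_const (u y)
  have hfe : (fun lam : ℝ => u (lam • y)) = fun lam : ℝ => lam ^ 2 * u y := by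
    funext lam; exact hhom lam y
  rw [hfe] at h1
  exact h1.unique h2

lemma euler2 (hu : ContDiffOn ℝ (⊤ : ℕ∞) u {z : Fin n → ℝ | z ≠ 0})
    (hhom : ∀ (lam : ℝ) (z : Fin n → ℝ), u (lam • z) = lam ^ 2 * u z)
    {y : Fin n → ℝ} (hy : y ≠ 0) (j : Fin n) :
    fderiv ℝ (pd j u) y y = pd j u y := by
  have hw : ContDiffOn ℝ (⊤ : ℕ∞) (pd j u) {z : Fin n → ℝ | z ≠ 0} :=
    pd_contDiffOn (isOpen_compl_singleton) hu j
  have hdy : DifferentiableAt ℝ (pd j u) y := diffAt_of_smoothOn hw hy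
  have hc : HasDerivAt (fun lam : ℝ => lam • y) y 1 := by
    simpa using (hasDerivAt_id (1:ℝ)).smul_const y
  have h1 : HasDerivAt (fun lam : ℝ => pd j u (lam • y)) (fderiv ℝ (pd j u) y y) 1 := by
    have hd1 : HasFDerivAt (pd j u) (fderiv ℝ (pd j u) y) ((1:ℝ) • y) := by
      rw [one_smul]; exact hdy.hasFDerivAt
    exact hd1.comp_hasDerivAt 1 hc
  have h2 : HasDerivAt (fun lam : ℝ => lam * pd j u y) (pd j u y) 1 := by
    simpa using (hasDerivAt_id (1:ℝ)).mul_const (pd j u y)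
  have hfe : (fun lam : ℝ => pd j u (lam • y)) =ᶠ[nhds 1]
      (fun lam : ℝ => lam * pd j u y) := by
    have : {lam : ℝ | lam ≠ 0} ∈ nhds (1:ℝ) :=
      (isOpen_compl_singleton (x := (0:ℝ))).mem_nhds (by norm_num)
    filter_upwards [this] with lam hl
    exact pd_homog hu hhom hl hy j
  exact (h1.congr_of_eventuallyEq hfe.symm).unique h2

lemma euler_double (hu : ContDiffOn ℝ (⊤ : ℕ∞) u {z : Fin n → ℝ | z ≠ 0})
    (hhom : ∀ (lam : ℝ) (z : Fin n → ℝ), u (lam • z) = lam ^ 2 * u z)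
    {y : Fin n → ℝ} (hy : y ≠ 0) :
    ∑ i, ∑ j, (pd i (pd j u) y / 2) * y i * y j = u y := by
  have key : ∀ j, ∑ i, pd i (pd j u) y * y i = pd j u y := by
    intro j
    have := euler2 hu hhom hy j
    rw [fderiv_eq_sum_pd] at this
    rw [← this]
    exact Finset.sum_congr rfl fun i _ => by ring
  have h1 : ∑ j, pd j u y * y j = 2 * u y := by
    have := euler1 hu hhom hy
    rw [fderiv_eq_sum_pd] at this
    rw [← this]
    exact Finset.sum_congr rfl fun i _ => by ring
  calc ∑ i, ∑ j, (pd i (pd j u) y / 2) * y i * y j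
      = ∑ j, (∑ i, pd i (pd j u) y * y i) * y j / 2 := by
        rw [Finset.sum_comm]
        refine Finset.sum_congr rfl fun j _ => ?_
        rw [Finset.sum_mul, Finset.sum_div]
        exact Finset.sum_congr rfl fun i _ => by ring
    _ = ∑ j, pd j u y * y j / 2 := by
        exact Finset.sum_congr rfl fun j _ => by rw [key j]
    _ = u y := by rw [← Finset.sum_div, h1]; ring

lemma pd_comm {f : (Fin n → ℝ) → ℝ} (hf : ContDiffOn ℝ (⊤ : ℕ∞) f {z : Fin n → ℝ | z ≠ 0})
    {y : Fin n → ℝ} (hy : y ≠ 0) (i j : Fin n) :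
    pd i (pd j f) y = pd j (pd i f) y := by
  have hOpen : IsOpen {z : Fin n → ℝ | z ≠ 0} := isOpen_compl_singleton
  have hc : ContDiffOn ℝ (⊤ : ℕ∞) (fderiv ℝ f) {z : Fin n → ℝ | z ≠ 0} :=
    hf.fderiv_of_isOpen (m := (⊤ : ℕ∞)) hOpen (by simp)
  have hcd : DifferentiableAt ℝ (fderiv ℝ f) y :=
    (hc.contDiffAt (omega_ne y hy)).differentiableAt (by simp)
  have hsymm : IsSymmSndFDerivAt ℝ f y :=
    (hf.contDiffAt (omega_ne y hy)).isSymmSndFDerivAt (by rw [minSmoothness_of_isRCLikeNormedField]; exact WithTop.coe_le_coe.mpr (le_top : (2 : ℕ∞) ≤ ⊤))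
  have key : ∀ a b : Fin n,
      pd a (pd b f) y = fderiv ℝ (fderiv ℝ f) y (Pi.single a 1) (Pi.single b 1) := by
    intro a b
    have h := fderiv_clm_apply (c := fderiv ℝ f)
      (u := fun _ => (Pi.single b 1 : Fin n → ℝ)) hcd (differentiableAt_const _)
    have hfun : pd b f =
        fun z => (fderiv ℝ f z) ((fun _ : Fin n → ℝ => (Pi.single b 1 : Fin n → ℝ)) z) := rfl
    rw [pd, hfun, h]
    simp
  rw [key i j, key j i]
  exact hsymm _ _

lemma pd_congr_nhds {f g : (Fin n → ℝ) → ℝ} {y : Fin n → ℝ}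
    (h : f =ᶠ[nhds y] g) (a : Fin n) : pd a f y = pd a g y := by
  rw [pd, pd, h.fderiv_eq]

lemma pd3_swap23 (hu : ContDiffOn ℝ (⊤ : ℕ∞) u {z : Fin n → ℝ | z ≠ 0})
    {y : Fin n → ℝ} (hy : y ≠ 0) (a b c : Fin n) :
    pd a (pd b (pd c u)) y = pd a (pd c (pd b u)) y := by
  refine pd_congr_nhds ?_ a
  filter_upwards [omega_ne y hy] with z hz
  exact pd_comm hu hz b c

lemma pd3_swap12 (hu : ContDiffOn ℝ (⊤ : ℕ∞) u {z : Fin n → ℝ | z ≠ 0})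
    {y : Fin n → ℝ} (hy : y ≠ 0) (a b c : Fin n) :
    pd a (pd b (pd c u)) y = pd b (pd a (pd c u)) y :=
  pd_comm (pd_contDiffOn isOpen_compl_singleton hu c) hy a b

/-- full symmetry: any of the six orders equal -/
lemma pd3_sym1 (hu : ContDiffOn ℝ (⊤ : ℕ∞) u {z : Fin n → ℝ | z ≠ 0})
    {y : Fin n → ℝ} (hy : y ≠ 0) (a b c : Fin n) :
    pd a (pd b (pd c u)) y = pd b (pd c (pd a u)) y := by
  rw [pd3_swap12 hu hy a b c, pd3_swap23 hu hy b a c]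


lemma pd_half {n : ℕ} {f : (Fin n → ℝ) → ℝ} {y : Fin n → ℝ}
    (hf : DifferentiableAt ℝ f y) (a : Fin n) :
    pd a (fun z => f z / 2) y = pd a f y / 2 := by
  have : (fun z => f z / 2) = fun z => (2:ℝ)⁻¹ * f z := by
    funext z; ring
  rw [pd, this, fderiv_const_mul hf]
  simp [pd]
  ring

/-- third derivative fully-symmetrized bracket in christoffel. -/
lemma christoffel_gF_eq {n : ℕ} {F : (Fin n → ℝ) → ℝ} (hu : ContDiffOn ℝ (⊤ : ℕ∞) (fun z => F z ^ 2) {z : Fin n → ℝ | z ≠ 0})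
    {y : Fin n → ℝ} (hy : y ≠ 0) (i j k : Fin n) :
    christoffel (gF F) y i j k =
      (1/4) * ∑ s, ginv (gF F) y i s * pd s (pd j (pd k (fun z => F z ^ 2))) y := by
  set u : (Fin n → ℝ) → ℝ := fun z => F z ^ 2 with hudef
  have hOpen : IsOpen {z : Fin n → ℝ | z ≠ 0} := isOpen_compl_singleton
  have hdiff : ∀ (b c : Fin n), DifferentiableAt ℝ (pd b (pd c u)) y := by
    intro b c
    exact diffAt_of_smoothOn (pd_contDiffOn hOpen (pd_contDiffOn hOpen hu c) b) hy
  have hpd : ∀ a b c : Fin n, pd a (fun z => gF F z b c) y = pd a (pd b (pd c u)) y / 2 := by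
    intro a b c
    have : (fun z => gF F z b c) = fun z => pd b (pd c u) z / 2 := rfl
    rw [this, pd_half (hdiff b c) a]
  rw [christoffel]
  rw [Finset.mul_sum, Finset.mul_sum]
  refine Finset.sum_congr rfl fun s _ => ?_
  rw [hpd k s j, hpd j s k, hpd s j k]
  have e1 : pd k (pd s (pd j u)) y = pd s (pd j (pd k u)) y := pd3_sym1 hu hy k s j
  have e2 : pd j (pd s (pd k u)) y = pd s (pd j (pd k u)) y := by
    rw [pd3_sym1 hu hy j s k, pd3_swap23 hu hy s k j]
  rw [e1, e2]
  ring


lemma gF_symm {n : ℕ} {F : (Fin n → ℝ) → ℝ} (hF : IsMinkowskiNorm n F)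
    {y : Fin n → ℝ} (hy : y ≠ 0) (i j : Fin n) : gF F y i j = gF F y j i := by
  have hu : ContDiffOn ℝ (⊤ : ℕ∞) (fun z => F z ^ 2) {z : Fin n → ℝ | z ≠ 0} := hF.smooth.pow 2
  unfold gF
  rw [pd_comm hu hy i j]

lemma gF_posdef_matrix {n : ℕ} {F : (Fin n → ℝ) → ℝ} (hF : IsMinkowskiNorm n F)
    {y : Fin n → ℝ} (hy : y ≠ 0) : (Matrix.of (gF F y)).PosDef := by
  refine Matrix.PosDef.of_dotProduct_mulVec_pos ?_ ?_
  · ext i j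
    simp only [Matrix.conjTranspose_apply, Matrix.of_apply, star_trivial]
    exact gF_symm hF hy j i
  · intro x hx
    have h := hF.posdef y hy x hx
    have : dotProduct (star x) (Matrix.of (gF F y) |>.mulVec x) = gmet (gF F) y x x := by
      rw [show (star x) = x from funext fun i => star_trivial _]
      rw [dotProduct, gmet]
      refine Finset.sum_congr rfl fun i _ => ?_
      rw [Matrix.mulVec, dotProduct, Finset.mul_sum]
      refine Finset.sum_congr rfl fun j _ => ?_
      simp only [Matrix.of_apply]
      ring
    rw [this]
    exact h

lemma thirdderiv_contract {n : ℕ} {F : (Fin n → ℝ) → ℝ} (hF : IsMinkowskiNorm n F)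
    {y b : Fin n → ℝ} (hy : y ≠ 0)
    (hpar : ∀ X : Fin n → ℝ, covVec (gF F) (fun _ => b) X y = 0) (s j : Fin n) :
    ∑ k, pd s (pd j (pd k (fun z => F z ^ 2))) y * b k = 0 := by
  have hu : ContDiffOn ℝ (⊤ : ℕ∞) (fun z => F z ^ 2) {z : Fin n → ℝ | z ≠ 0} := hF.smooth.pow 2
  -- step 1 : christoffel contraction vanishes
  have step1 : ∀ i, ∑ k, christoffel (gF F) y i j k * b k = 0 := by
    intro i
    have h := congrFun (hpar (Pi.single j 1)) i
    simp only [covVec, Pi.zero_apply] at h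
    have hconst : fderiv ℝ (fun _ : Fin n → ℝ => b i) y = 0 := fderiv_const_apply (b i)
    rw [hconst] at h
    simp only [ContinuousLinearMap.zero_apply, zero_add] at h
    rw [Finset.sum_eq_single j] at h
    · rw [← h]
      refine Finset.sum_congr rfl fun k _ => ?_
      simp [Pi.single_apply]
    · intro c _ hc
      apply Finset.sum_eq_zero
      intro k _
      simp [Pi.single_apply, hc]
    · intro hj; exact absurd (Finset.mem_univ j) hj
  -- step 2 : rewrite via the symmetrized christoffel and kill with the inverse metric
  set M : Matrix (Fin n) (Fin n) ℝ := Matrix.of (gF F y) with hM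
  have hMpd : M.PosDef := gF_posdef_matrix hF hy
  set v : Fin n → ℝ := fun s => ∑ k, pd s (pd j (pd k (fun z => F z ^ 2))) y * b k with hv
  have hinv : M⁻¹.mulVec v = 0 := by
    funext i
    have h := step1 i
    have key : ∑ k, christoffel (gF F) y i j k * b k = (1/4) * M⁻¹.mulVec v i := by
      have e1 : ∀ k, christoffel (gF F) y i j k * b k
          = (1/4) * ∑ t, M⁻¹ i t * (pd t (pd j (pd k (fun z => F z ^ 2))) y * b k) := by
        intro k
        rw [christoffel_gF_eq hu hy i j k]
        have : ginv (gF F) y = M⁻¹ := rfl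
        rw [this, Finset.mul_sum, Finset.mul_sum, Finset.sum_mul]
        exact Finset.sum_congr rfl fun t _ => by ring
      calc ∑ k, christoffel (gF F) y i j k * b k
          = ∑ k, (1/4 : ℝ) * ∑ t, M⁻¹ i t * (pd t (pd j (pd k (fun z => F z ^ 2))) y * b k) :=
            Finset.sum_congr rfl fun k _ => e1 k
        _ = (1/4 : ℝ) * ∑ k, ∑ t, M⁻¹ i t * (pd t (pd j (pd k (fun z => F z ^ 2))) y * b k) := by
            rw [Finset.mul_sum]
        _ = (1/4 : ℝ) * ∑ t, ∑ k, M⁻¹ i t * (pd t (pd j (pd k (fun z => F z ^ 2))) y * b k) := by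
            rw [Finset.sum_comm]
        _ = (1/4 : ℝ) * ∑ t, M⁻¹ i t * v t := by
            refine congrArg _ (Finset.sum_congr rfl fun t _ => ?_)
            rw [hv, Finset.mul_sum]
        _ = (1/4 : ℝ) * M⁻¹.mulVec v i := by
            rw [Matrix.mulVec, dotProduct]
    have h0 : (1/4 : ℝ) * M⁻¹.mulVec v i = 0 := by rw [← key]; exact h
    have : M⁻¹.mulVec v i = 0 := by linarith
    exact this
  have : v = M.mulVec (M⁻¹.mulVec v) := by
    rw [Matrix.mulVec_mulVec, Matrix.mul_nonsing_inv M (isUnit_iff_ne_zero.mpr hMpd.det_pos.ne'), Matrix.one_mulVec]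
  rw [hinv, Matrix.mulVec_zero] at this
  exact congrFun this s


lemma gF_const_of_parallel {n : ℕ} {F : (Fin n → ℝ) → ℝ} (hF : IsMinkowskiNorm n F)
    (habs : ∀ lam : ℝ, ∀ y : Fin n → ℝ, F (lam • y) = |lam| * F y)
    {b : Fin n → ℝ} (hb : b ≠ 0)
    (hpar : ∀ y : Fin n → ℝ, y ≠ 0 → ∀ X : Fin n → ℝ, covVec (gF F) (fun _ => b) X y = 0)
    {y : Fin n → ℝ} (hy : y ≠ 0) (i j : Fin n) :
    gF F y i j = gF F b i j := by
  set u : (Fin n → ℝ) → ℝ := fun z => F z ^ 2 with hudef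
  have hu : ContDiffOn ℝ (⊤ : ℕ∞) u {z : Fin n → ℝ | z ≠ 0} := hF.smooth.pow 2
  have hhom : ∀ (lam : ℝ) (z : Fin n → ℝ), u (lam • z) = lam ^ 2 * u z := by
    intro lam z
    simp only [hudef]
    rw [habs lam z, mul_pow, sq_abs]
  have hOpen : IsOpen {z : Fin n → ℝ | z ≠ 0} := isOpen_compl_singleton
  have hw : ContDiffOn ℝ (⊤ : ℕ∞) (pd j u) {z : Fin n → ℝ | z ≠ 0} := pd_contDiffOn hOpen hu j
  have hw2 : ContDiffOn ℝ (⊤ : ℕ∞) (pd i (pd j u)) {z : Fin n → ℝ | z ≠ 0} :=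
    pd_contDiffOn hOpen hw i
  -- directional derivative along b of the second derivative vanishes
  have hdir : ∀ p : Fin n → ℝ, p ≠ 0 → fderiv ℝ (pd i (pd j u)) p b = 0 := by
    intro p hp
    rw [fderiv_eq_sum_pd]
    have h3 := thirdderiv_contract hF hp (hpar p hp) i j
    rw [← h3]
    refine Finset.sum_congr rfl fun k _ => ?_
    rw [pd3_sym1 hu hp k i j]
    ring
  -- enough to show pd i (pd j u) y = pd i (pd j u) b
  suffices hsuff : pd i (pd j u) y = pd i (pd j u) b by
    simp only [gF]; exact congrArg (fun x => x / 2) hsuff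
  by_cases hyb : ∃ c : ℝ, y = c • b
  · obtain ⟨c, rfl⟩ := hyb
    have hc : c ≠ 0 := by
      rintro rfl; rw [zero_smul] at hy; exact hy rfl
    exact pd_pd_homog hu hhom hc hb i j
  · -- y not a multiple of b : the line y + t b avoids the origin
    have hline : ∀ t : ℝ, y + t • b ≠ 0 := by
      intro t h0
      exact hyb ⟨-t, by rw [neg_smul, ← sub_eq_zero]; simpa [sub_neg_eq_add, add_comm] using h0⟩
    -- constancy along the line
    have hconst : ∀ t : ℝ, pd i (pd j u) (y + t • b) = pd i (pd j u) y := by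
      have hder : ∀ t : ℝ, HasDerivAt (fun t : ℝ => pd i (pd j u) (y + t • b)) 0 t := by
        intro t
        have hc : HasDerivAt (fun t : ℝ => y + t • b) b t := by
          simpa using ((hasDerivAt_id t).smul_const b).const_add y
        have hdp : DifferentiableAt ℝ (pd i (pd j u)) (y + t • b) :=
          diffAt_of_smoothOn hw2 (hline t)
        have := hdp.hasFDerivAt.comp_hasDerivAt t hc
        rw [hdir (y + t • b) (hline t)] at this
        exact this
      intro t
      exact is_const_of_deriv_eq_zero (fun t => (hder t).differentiableAt)
        (fun t => (hder t).deriv) t 0 |>.trans (by simp)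
    -- homogeneity : value along s•y + b for s > 0 equals value at y
    have hApprox : ∀ s : ℝ, 0 < s → pd i (pd j u) (s • y + b) = pd i (pd j u) y := by
      intro s hs
      have hs' : s ≠ 0 := hs.ne'
      have h1 : s • y + b = s • (y + s⁻¹ • b) := by
        rw [smul_add, smul_smul, mul_inv_cancel₀ hs', one_smul]
      rw [h1, pd_pd_homog hu hhom hs' (hline s⁻¹) i j]
      exact hconst s⁻¹
    -- continuity at b
    have hcont : ContinuousAt (fun s : ℝ => pd i (pd j u) (s • y + b)) 0 := by
      have hcb : ContinuousAt (pd i (pd j u)) b := by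
        refine (hw2.continuousOn.continuousAt (omega_ne b hb))
      have hmap : ContinuousAt (fun s : ℝ => s • y + b) 0 := by fun_prop
      exact ContinuousAt.comp (by simpa using hcb) hmap
    have ht1 : Filter.Tendsto (fun s : ℝ => pd i (pd j u) (s • y + b)) (nhdsWithin 0 (Set.Ioi 0))
        (nhds (pd i (pd j u) b)) := by
      have := hcont.tendsto
      simp only [zero_smul, zero_add] at this
      exact this.mono_left nhdsWithin_le_nhds
    have ht2 : Filter.Tendsto (fun s : ℝ => pd i (pd j u) (s • y + b)) (nhdsWithin 0 (Set.Ioi 0))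
        (nhds (pd i (pd j u) y)) := by
      refine Filter.Tendsto.congr' ?_ tendsto_const_nhds
      filter_upwards [self_mem_nhdsWithin] with s hs
      exact (hApprox s hs).symm
    exact tendsto_nhds_unique ht2 ht1


lemma quad_pd1 {n : ℕ} (Q : Matrix (Fin n) (Fin n) ℝ) (y : Fin n → ℝ) (j : Fin n) :
    pd j (fun z => ∑ i, ∑ k, Q i k * z i * z k) y
      = ∑ i, Q i j * y i + ∑ k, Q j k * y k := by
  have hproj : ∀ a : Fin n, HasFDerivAt (fun z : Fin n → ℝ => z a)
      (ContinuousLinearMap.proj a : (Fin n → ℝ) →L[ℝ] ℝ) y :=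
    fun a => by
      have h := (ContinuousLinearMap.proj (R := ℝ) (φ := fun _ : Fin n => ℝ) a).hasFDerivAt (x := y)
      exact h
  have hterm : ∀ i k : Fin n, HasFDerivAt (fun z : Fin n → ℝ => Q i k * z i * z k)
      (Q i k • (y i • (ContinuousLinearMap.proj k : (Fin n → ℝ) →L[ℝ] ℝ)
        + y k • (ContinuousLinearMap.proj i : (Fin n → ℝ) →L[ℝ] ℝ))) y := by
    intro i k
    have h1 := ((hproj i).mul (hproj k)).const_mul (Q i k)
    have he : (fun z : Fin n → ℝ => Q i k * (z i * z k))
        = fun z : Fin n → ℝ => Q i k * z i * z k := by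
      funext z; ring
    rw [← he]
    exact h1
  have hsum : HasFDerivAt (fun z : Fin n → ℝ => ∑ i, ∑ k, Q i k * z i * z k)
      (∑ i, ∑ k, Q i k • (y i • (ContinuousLinearMap.proj k : (Fin n → ℝ) →L[ℝ] ℝ)
        + y k • (ContinuousLinearMap.proj i : (Fin n → ℝ) →L[ℝ] ℝ))) y := by
    have := HasFDerivAt.fun_sum (fun i (_ : i ∈ Finset.univ) =>
      HasFDerivAt.fun_sum (fun k (_ : k ∈ Finset.univ) => hterm i k))
    simpa using this
  rw [pd, hsum.fderiv]
  simp only [ContinuousLinearMap.coe_sum', Finset.sum_apply,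
    ContinuousLinearMap.smul_apply, ContinuousLinearMap.add_apply,
    ContinuousLinearMap.proj_apply, smul_eq_mul]
  have e1 : ∀ i : Fin n, ∑ k, Q i k * y i * (Pi.single j 1 : Fin n → ℝ) k = Q i j * y i := by
    intro i
    rw [Finset.sum_eq_single j]
    · simp
    · intro c _ hc; simp [Pi.single_apply, hc]
    · intro h; exact absurd (Finset.mem_univ j) h
  have e2 : ∑ i : Fin n, (∑ k, Q i k * y k) * (Pi.single j 1 : Fin n → ℝ) i = ∑ k, Q j k * y k := by
    rw [Finset.sum_eq_single j]
    · simp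
    · intro c _ hc; simp [Pi.single_apply, hc]
    · intro h; exact absurd (Finset.mem_univ j) h
  calc ∑ i, ∑ k, Q i k * (y i * (Pi.single j 1 : Fin n → ℝ) k + y k * (Pi.single j 1 : Fin n → ℝ) i)
      = ∑ i : Fin n, ((∑ k, Q i k * y i * (Pi.single j 1 : Fin n → ℝ) k)
          + (∑ k, Q i k * y k) * (Pi.single j 1 : Fin n → ℝ) i) := by
        refine Finset.sum_congr rfl fun i _ => ?_
        rw [Finset.sum_mul, ← Finset.sum_add_distrib]
        refine Finset.sum_congr rfl fun k _ => by ring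
    _ = ∑ i, Q i j * y i + ∑ k, Q j k * y k := by
        rw [Finset.sum_add_distrib, e2]
        congr 1
        exact Finset.sum_congr rfl fun i _ => e1 i

lemma lin_pd {n : ℕ} (A : Fin n → ℝ) (y : Fin n → ℝ) (i : Fin n) :
    pd i (fun z => ∑ a, A a * z a) y = A i := by
  have hsum : HasFDerivAt (fun z : Fin n → ℝ => ∑ a, A a * z a)
      (∑ a, A a • (ContinuousLinearMap.proj a : (Fin n → ℝ) →L[ℝ] ℝ)) y := by
    have := HasFDerivAt.fun_sum (fun a (_ : a ∈ Finset.univ) =>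
      HasFDerivAt.const_mul (by
        have h := (ContinuousLinearMap.proj (R := ℝ) (φ := fun _ : Fin n => ℝ) a).hasFDerivAt
          (x := y)
        exact h) (A a))
    simpa using this
  rw [pd, hsum.fderiv]
  simp only [ContinuousLinearMap.coe_sum', Finset.sum_apply,
    ContinuousLinearMap.smul_apply, ContinuousLinearMap.proj_apply, smul_eq_mul]
  rw [Finset.sum_eq_single i]
  · simp
  · intro c _ hc; simp [Pi.single_apply, hc]
  · intro h; exact absurd (Finset.mem_univ i) h

lemma quad_pd2 {n : ℕ} (Q : Matrix (Fin n) (Fin n) ℝ) (y : Fin n → ℝ) (i j : Fin n) :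
    pd i (pd j (fun z => ∑ a, ∑ k, Q a k * z a * z k)) y = Q i j + Q j i := by
  have hfun : pd j (fun z => ∑ a, ∑ k, Q a k * z a * z k)
      = fun w => ∑ a, (Q a j + Q j a) * w a := by
    funext w
    rw [quad_pd1]
    rw [← Finset.sum_add_distrib]
    exact Finset.sum_congr rfl fun a _ => by ring
  rw [hfun, lin_pd]

lemma pd_const {n : ℕ} (c : ℝ) (y : Fin n → ℝ) (a : Fin n) :
    pd a (fun _ => c) y = 0 := by
  rw [pd]
  have : fderiv ℝ (fun _ : Fin n → ℝ => c) y = 0 := fderiv_const_apply c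
  rw [this]
  simp


lemma gF_of_quad {n : ℕ} {F : (Fin n → ℝ) → ℝ} (Q : Matrix (Fin n) (Fin n) ℝ)
    (hFQ : ∀ z, F z ^ 2 = ∑ i, ∑ j, Q i j * z i * z j) (y : Fin n → ℝ) (i j : Fin n) :
    gF F y i j = (Q i j + Q j i) / 2 := by
  have hfun : (fun z => F z ^ 2) = fun z => ∑ a, ∑ k, Q a k * z a * z k := funext hFQ
  rw [gF, hfun, quad_pd2]

lemma christoffel_of_quad {n : ℕ} {F : (Fin n → ℝ) → ℝ} (Q : Matrix (Fin n) (Fin n) ℝ)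
    (hFQ : ∀ z, F z ^ 2 = ∑ i, ∑ j, Q i j * z i * z j) (y : Fin n → ℝ) (i j k : Fin n) :
    christoffel (gF F) y i j k = 0 := by
  have hconst : ∀ (s t a : Fin n), pd a (fun z => gF F z s t) y = 0 := by
    intro s t a
    have : (fun z => gF F z s t) = fun _ => (Q s t + Q t s) / 2 :=
      funext fun z => gF_of_quad Q hFQ z s t
    rw [this, pd_const]
  rw [christoffel]
  rw [Finset.sum_eq_zero]
  · ring
  · intro s _
    rw [hconst s j k, hconst s k j, hconst j k s]
    ring


/-- Theorem 2 of the paper: For `n ≥ 3` and `F` absolutely homogeneous,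
`F` is induced by an inner product if and only if there exists a nonzero constant vector
field `b` on `ℝⁿ∖{0}` parallel with respect to the Levi-Civita connection of `ĝ`. -/
theorem inner_product_iff_parallel_field {n : ℕ} (hn : 3 ≤ n)
    (F : (Fin n → ℝ) → ℝ) (hF : IsMinkowskiNorm n F)
    (habs : ∀ lam : ℝ, ∀ y : Fin n → ℝ, F (lam • y) = |lam| * F y) :
    (∃ Q : Matrix (Fin n) (Fin n) ℝ, Q.IsSymm ∧ Q.PosDef ∧
      ∀ y : Fin n → ℝ, F y = Real.sqrt (∑ i, ∑ j, Q i j * y i * y j)) ↔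
    (∃ b : Fin n → ℝ, b ≠ 0 ∧ ∀ y : Fin n → ℝ, y ≠ 0 → ∀ X : Fin n → ℝ,
      covVec (gF F) (fun _ => b) X y = 0) := by
  have hn0 : 0 < n := by omega
  constructor
  · rintro ⟨Q, hsym, hpos, hFQ⟩
    -- F² is the quadratic form of Q
    have hFsq : ∀ z : Fin n → ℝ, F z ^ 2 = ∑ i, ∑ j, Q i j * z i * z j := by
      intro z
      have hS : (0:ℝ) ≤ ∑ i, ∑ j, Q i j * z i * z j := by
        rcases eq_or_ne z 0 with rfl | hz
        · simp
        · have h := hpos.dotProduct_mulVec_pos hz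
          have he : dotProduct (star z) (Q.mulVec z) = ∑ i, ∑ j, Q i j * z i * z j := by
            rw [show (star z) = z from funext fun i => star_trivial _]
            rw [dotProduct]
            refine Finset.sum_congr rfl fun i _ => ?_
            rw [Matrix.mulVec, dotProduct, Finset.mul_sum]
            exact Finset.sum_congr rfl fun j _ => by ring
          rw [he] at h
          exact h.le
      rw [hFQ z, Real.sq_sqrt hS]
    set b0 : Fin n → ℝ := Pi.single ⟨0, hn0⟩ 1 with hb0def
    refine ⟨b0, ?_, ?_⟩
    · intro h
      have := congrFun h ⟨0, hn0⟩
      simp [hb0def] at this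
    · intro y hy X
      funext i
      rw [covVec]
      have h1 : fderiv ℝ (fun _ : Fin n → ℝ => b0 i) y = 0 := fderiv_const_apply _
      rw [h1]
      rw [Finset.sum_eq_zero]
      · simp
      · intro j _
        refine Finset.sum_eq_zero fun k _ => ?_
        rw [christoffel_of_quad Q hFsq y i j k]
        ring
  · rintro ⟨b, hb0, hpar⟩
    set u : (Fin n → ℝ) → ℝ := fun z => F z ^ 2 with hudef
    have hu : ContDiffOn ℝ (⊤ : ℕ∞) u {z : Fin n → ℝ | z ≠ 0} := hF.smooth.pow 2
    have hhom : ∀ (lam : ℝ) (z : Fin n → ℝ), u (lam • z) = lam ^ 2 * u z := by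
      intro lam z
      simp only [hudef]
      rw [habs lam z, mul_pow, sq_abs]
    have hgconst : ∀ y : Fin n → ℝ, y ≠ 0 → ∀ i j, gF F y i j = gF F b i j :=
      fun y hy i j => gF_const_of_parallel hF habs hb0 hpar hy i j
    refine ⟨Matrix.of (gF F b), ?_, ?_, ?_⟩
    · -- symmetry
      ext i j
      simp only [Matrix.transpose_apply, Matrix.of_apply]
      exact gF_symm hF hb0 j i
    · exact gF_posdef_matrix hF hb0
    · intro y
      rcases eq_or_ne y 0 with rfl | hy
      · have h0 : F 0 = 0 := by
          have := habs 0 0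
          simpa using this
        rw [h0]
        have : ∑ i, ∑ j, Matrix.of (gF F b) i j * (0 : Fin n → ℝ) i * (0 : Fin n → ℝ) j = 0 := by
          refine Finset.sum_eq_zero fun i _ => Finset.sum_eq_zero fun j _ => by simp
        rw [this, Real.sqrt_zero]
      · have hquad : ∑ i, ∑ j, Matrix.of (gF F b) i j * y i * y j = F y ^ 2 := by
          have h1 : ∑ i, ∑ j, Matrix.of (gF F b) i j * y i * y j
              = ∑ i, ∑ j, (pd i (pd j u) y / 2) * y i * y j := by
            refine Finset.sum_congr rfl fun i _ => Finset.sum_congr rfl fun j _ => ?_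
            rw [Matrix.of_apply, ← hgconst y hy i j]
            rfl
          rw [h1, euler_double hu hhom hy]
        rw [hquad, Real.sqrt_sq (hF.nonneg y)]
end Homog
end
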